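/- arXiv:1509.06992 — 7 statements merged into one kernel-verified Lean document; each statement's English description precedes it below -/
import Mathlib

section
/- Under Assumption 1, for every x ∈ ℝ² with x ≠ 0, the set {t > 0 : (exp(t A) x)₁ = 0} of positive times at which the flow from x reaches the jump set D is nonempty and has a least element τ(x); moreover τ(x) ≤ π/ω, where ω = √(4·k·m − c²)/(2·m). In particular, every flowing solution starting from a nonzero point reaches D in finite forward time, uniformly over all nonzero initial conditions. -/
/-- The system matrix `A = ![![0, 1], ![-k/m, -c/m]]`. -/
noncomputable def Amat (m c k : ℝ) : Matrix (Fin 2) (Fin 2) ℝ :=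
  ![![0, 1], ![-k/m, -c/m]]

/-- The flow map `x ↦ exp(t A) x` (matrix exponential). -/
noncomputable def flow (m c k : ℝ) (t : ℝ) (x : Fin 2 → ℝ) : Fin 2 → ℝ :=
  (NormedSpace.exp (t • Amat m c k)).mulVec x

open NormedSpace

attribute [local instance] Matrix.linftyOpNormedRing Matrix.linftyOpNormedAlgebra

noncomputable def phiHom (M : Matrix (Fin 2) (Fin 2) ℝ) (hM : M * M = -1) :
    ℂ →+* Matrix (Fin 2) (Fin 2) ℝ where
  toFun z := z.re • (1 : Matrix (Fin 2) (Fin 2) ℝ) + z.im • M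
  map_one' := by simp
  map_mul' z w := by
    have : (z.re • (1 : Matrix (Fin 2) (Fin 2) ℝ) + z.im • M) *
        (w.re • (1 : Matrix (Fin 2) (Fin 2) ℝ) + w.im • M)
        = (z.re * w.re) • (1 : Matrix (Fin 2) (Fin 2) ℝ) + (z.re * w.im) • M
          + (z.im * w.re) • M + (z.im * w.im) • (M * M) := by
      simp [add_mul, mul_add, smul_mul_assoc, mul_smul_comm, smul_smul]
      module
    show (z*w).re • (1 : Matrix (Fin 2) (Fin 2) ℝ) + (z*w).im • M = _
    rw [this, hM, Complex.mul_re, Complex.mul_im]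
    module
  map_zero' := by simp
  map_add' z w := by
    simp [Complex.add_re, Complex.add_im, add_smul]
    abel

lemma phiHom_cont (M : Matrix (Fin 2) (Fin 2) ℝ) (hM : M * M = -1) :
    Continuous (phiHom M hM) := by
  simp only [phiHom, RingHom.coe_mk, MonoidHom.coe_mk, OneHom.coe_mk]
  exact (Complex.continuous_re.smul continuous_const).add
    (Complex.continuous_im.smul continuous_const)

lemma exp_phi (M : Matrix (Fin 2) (Fin 2) ℝ) (hM : M * M = -1) (a b : ℝ) :
    exp ((a : ℝ) • (1 : Matrix (Fin 2) (Fin 2) ℝ) + b • M)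
      = (Real.exp a * Real.cos b) • (1 : Matrix (Fin 2) (Fin 2) ℝ)
        + (Real.exp a * Real.sin b) • M := by
  have h1 : (a : ℝ) • (1 : Matrix (Fin 2) (Fin 2) ℝ) + b • M = phiHom M hM ⟨a, b⟩ := rfl
  erw [h1, ← map_exp (phiHom M hM) (phiHom_cont M hM),
    ← Complex.exp_eq_exp_ℂ]
  have hre : (Complex.exp ⟨a, b⟩).re = Real.exp a * Real.cos b := by
    rw [Complex.exp_re]
  have him : (Complex.exp ⟨a, b⟩).im = Real.exp a * Real.sin b := by
    rw [Complex.exp_im]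
  show (Complex.exp ⟨a, b⟩).re • (1 : Matrix (Fin 2) (Fin 2) ℝ)
      + (Complex.exp ⟨a, b⟩).im • M = _
  rw [hre, him]

lemma flow_formula (m c k : ℝ) (hm : 0 < m) (hc : 0 < c) (hk : 0 < k)
    (hud : c ^ 2 < 4 * k * m) (x : Fin 2 → ℝ) (t : ℝ) :
    flow m c k t x 0 =
      Real.exp (-c/(2*m) * t) *
        (x 0 * Real.cos (Real.sqrt (4*k*m - c^2)/(2*m) * t)
          + ((x 1 + c/(2*m) * x 0) / (Real.sqrt (4*k*m - c^2)/(2*m)))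
            * Real.sin (Real.sqrt (4*k*m - c^2)/(2*m) * t)) := by
  have hsub : (0:ℝ) < 4*k*m - c^2 := by nlinarith
  set α : ℝ := -c/(2*m) with hα
  set ω : ℝ := Real.sqrt (4*k*m - c^2)/(2*m) with hω
  have hωpos : 0 < ω := div_pos (Real.sqrt_pos.mpr hsub) (by linarith)
  have hωne : ω ≠ 0 := hωpos.ne'
  have hω2 : ω^2 = (4*k*m - c^2)/(4*m^2) := by
    rw [hω, div_pow, Real.sq_sqrt hsub.le]; ring
  set B : Matrix (Fin 2) (Fin 2) ℝ := Amat m c k - α • 1 with hB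
  have hBe : ∀ i j, B i j = Amat m c k i j - α * (1 : Matrix (Fin 2) (Fin 2) ℝ) i j := fun _ _ => rfl
  have hB2 : B * B = (-(ω^2)) • (1 : Matrix (Fin 2) (Fin 2) ℝ) := by
    rw [hω2]
    ext i j
    fin_cases i <;> fin_cases j <;>
      simp [hBe, hα, Amat, Matrix.mul_apply, Fin.sum_univ_two, Matrix.sub_apply,
        Matrix.smul_apply, Matrix.one_apply] <;>
      field_simp <;> ring
  set M : Matrix (Fin 2) (Fin 2) ℝ := ω⁻¹ • B with hMdef
  have hM : M * M = -1 := by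
    rw [hMdef, smul_mul_assoc, mul_smul_comm, smul_smul, hB2, smul_smul]
    have : ω⁻¹ * ω⁻¹ * -ω^2 = -1 := by field_simp
    rw [this, neg_smul, one_smul]
  have hA : t • Amat m c k = (α*t) • (1 : Matrix (Fin 2) (Fin 2) ℝ) + (ω*t) • M := by
    rw [hMdef, hB, smul_smul]
    have h1 : ω*t*ω⁻¹ = t := by field_simp
    rw [h1, smul_sub]
    module
  have hexp := exp_phi M hM (α*t) (ω*t)
  rw [← hA] at hexp
  have hMx : M.mulVec x 0 = ω⁻¹ * (-α * x 0 + x 1) := by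
    simp [hMdef, hBe, hα, Amat, Matrix.mulVec, dotProduct, Fin.sum_univ_two,
      Matrix.sub_apply, Matrix.smul_apply, Matrix.one_apply]
    ring
  have key : flow m c k t x 0
      = (Real.exp (α*t) * Real.cos (ω*t)) * x 0
        + (Real.exp (α*t) * Real.sin (ω*t)) * (ω⁻¹ * (-α * x 0 + x 1)) := by
    show (NormedSpace.exp (t • Amat m c k)).mulVec x 0 = _
    rw [hexp, Matrix.add_mulVec, Matrix.smul_mulVec, Matrix.smul_mulVec,
      Matrix.one_mulVec]
    simp only [Pi.add_apply, Pi.smul_apply, hMx, smul_eq_mul]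
  rw [key]
  have : -α = c/(2*m) := by rw [hα]; ring
  rw [this]
  field_simp
  ring

/-- under Assumption 1, for every `x ≠ 0` the set of positive times
at which the flow from `x` reaches the jump set `D = {x : x₁ = 0}` is nonempty and
has a least element `τ(x)`, and moreover `τ(x) ≤ π/ω` with
`ω = √(4·k·m − c²)/(2·m)`. -/
theorem stmt1 (m c k : ℝ) (hm : 0 < m) (hc : 0 < c) (hk : 0 < k)
    (hud : c ^ 2 < 4 * k * m) :
    ∀ x : Fin 2 → ℝ, x ≠ 0 →
      ∃ τx : ℝ, IsLeast {t : ℝ | 0 < t ∧ flow m c k t x 0 = 0} τx ∧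
        τx ≤ Real.pi / (Real.sqrt (4 * k * m - c ^ 2) / (2 * m)) := by
  intro x hx
  have hsub : (0:ℝ) < 4*k*m - c^2 := by nlinarith
  set ω : ℝ := Real.sqrt (4*k*m - c^2)/(2*m) with hωdef
  have hωpos : 0 < ω := div_pos (Real.sqrt_pos.mpr hsub) (by linarith)
  set a : ℝ := x 0 with hadef
  set b : ℝ := (x 1 + c/(2*m) * x 0) / ω with hbdef
  set g : ℝ → ℝ := fun t => a * Real.cos (ω*t) + b * Real.sin (ω*t) with hgdef
  have hflow : ∀ t, flow m c k t x 0 = Real.exp (-c/(2*m)*t) * g t := by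
    intro t
    have := flow_formula m c k hm hc hk hud x t
    rw [this, hgdef]
  have hSet : {t : ℝ | 0 < t ∧ flow m c k t x 0 = 0} = {t | 0 < t ∧ g t = 0} := by
    ext t
    constructor <;> rintro ⟨ht, h2⟩ <;> refine ⟨ht, ?_⟩
    · rw [hflow t, mul_eq_zero] at h2
      rcases h2 with h | h
      · exact absurd h (Real.exp_ne_zero _)
      · exact h
    · rw [hflow t, h2, mul_zero]
  rw [hSet]
  have hT : 0 < Real.pi / ω := div_pos Real.pi_pos hωpos
  have hωT : ω * (Real.pi / ω) = Real.pi := by field_simp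
  have hgT : g (Real.pi / ω) = -a := by
    rw [hgdef]; simp only []
    rw [hωT, Real.cos_pi, Real.sin_pi]; ring
  have hg0 : g 0 = a := by rw [hgdef]; simp
  have hgc : Continuous g := by rw [hgdef]; fun_prop
  by_cases ha : a = 0
  · -- x 0 = 0, so x 1 ≠ 0 and b ≠ 0
    have hx1 : x 1 ≠ 0 := by
      intro h1
      apply hx
      funext i
      fin_cases i
      · exact ha
      · exact h1
    have hb : b ≠ 0 := by
      rw [hbdef, ← hadef, ha]
      simp only [mul_zero, add_zero]
      exact div_ne_zero hx1 hωpos.ne'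
    refine ⟨Real.pi / ω, ⟨⟨hT, by rw [hgT, ha, neg_zero]⟩, ?_⟩, le_refl _⟩
    rintro t ⟨ht, hgt⟩
    by_contra hlt
    push_neg at hlt
    have hsin : 0 < Real.sin (ω * t) := by
      apply Real.sin_pos_of_pos_of_lt_pi (mul_pos hωpos ht)
      calc ω * t < ω * (Real.pi / ω) := by
            exact mul_lt_mul_of_pos_left hlt hωpos
        _ = Real.pi := hωT
    rw [hgdef] at hgt
    simp only [ha, zero_mul, zero_add] at hgt
    exact absurd hgt (mul_ne_zero hb hsin.ne')
  · -- a ≠ 0 : IVT gives a zero in (0, π/ω]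
    obtain ⟨τ, hτmem, hτ0⟩ : ∃ τ ∈ Set.Icc 0 (Real.pi / ω), g τ = 0 := by
      rcases lt_or_gt_of_ne ha with hneg | hpos
      · have h := intermediate_value_Icc hT.le hgc.continuousOn
        have h0 : (0:ℝ) ∈ Set.Icc (g 0) (g (Real.pi / ω)) := by
          rw [hg0, hgT]; constructor <;> linarith
        obtain ⟨τ, hτ, hgτ⟩ := h h0
        exact ⟨τ, hτ, hgτ⟩
      · have h := intermediate_value_Icc' hT.le hgc.continuousOn
        have h0 : (0:ℝ) ∈ Set.Icc (g (Real.pi / ω)) (g 0) := by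
          rw [hg0, hgT]; constructor <;> linarith
        obtain ⟨τ, hτ, hgτ⟩ := h h0
        exact ⟨τ, hτ, hgτ⟩
    have hτpos : 0 < τ := by
      rcases eq_or_lt_of_le hτmem.1 with h | h
      · exfalso; subst h; exact ha (hg0.symm.trans hτ0)
      · exact h
    obtain ⟨δ, hδpos, hδ⟩ : ∃ δ > 0, ∀ s : ℝ, |s| < δ → g s ≠ 0 := by
      have hUopen : IsOpen {s : ℝ | g s ≠ 0} :=
        isOpen_compl_singleton.preimage hgc
      have h0U : (0:ℝ) ∈ {s : ℝ | g s ≠ 0} := by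
        simp only [Set.mem_setOf_eq, hg0]; exact ha
      rcases Metric.isOpen_iff.mp hUopen 0 h0U with ⟨δ, hδpos, hball⟩
      refine ⟨δ, hδpos, fun s hs => hball ?_⟩
      simpa [Real.dist_eq] using hs
    have hge : ∀ t : ℝ, 0 < t → g t = 0 → δ ≤ t := by
      intro t ht hgt
      by_contra hlt
      push_neg at hlt
      exact hδ t (by rw [abs_of_pos ht]; exact hlt) hgt
    set S' : Set ℝ := {s : ℝ | g s = 0} ∩ Set.Ici δ with hS'def
    have hSS' : {t : ℝ | 0 < t ∧ g t = 0} = S' := by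
      ext t
      constructor
      · rintro ⟨ht, hgt⟩; exact ⟨hgt, hge t ht hgt⟩
      · rintro ⟨hgt, hget⟩; exact ⟨lt_of_lt_of_le hδpos hget, hgt⟩
    have hclosed : IsClosed S' :=
      (isClosed_singleton.preimage hgc).inter isClosed_Ici
    have hτS' : τ ∈ S' := ⟨hτ0, hge τ hτpos hτ0⟩
    have hbdd : BddBelow S' := ⟨δ, fun s hs => hs.2⟩
    refine ⟨sInf S', ?_, ?_⟩
    · rw [hSS']
      exact ⟨hclosed.csInf_mem ⟨τ, hτS'⟩ hbdd, fun s hs => csInf_le hbdd hs⟩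
    · exact le_trans (csInf_le hbdd hτS') hτmem.2
end

section
/- Under Assumption 1 and with θ̂ > 0, for every v ≥ 0 the flow started at the post-jump point (θ̂, v) reaches the jump set D with strictly negative velocity at its first hitting time; that is, (exp(τ((θ̂, v)) A) · (θ̂, v))₂ < 0, equivalently P(v) > 0 for every v ≥ 0. -/
/-- The total mechanical energy `E(x) = (1/2)·m·x₂² + (1/2)·k·x₁²`. -/
noncomputable def energy (m k : ℝ) (x : Fin 2 → ℝ) : ℝ :=
  (1 / 2) * m * (x 1) ^ 2 + (1 / 2) * k * (x 0) ^ 2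

/-- `τ` is the first-hitting-time map of the jump set `D = {x : x₁ = 0}`:
for every `x ≠ 0`, `τ x` is the least `t > 0` with `(exp(t A) x)₁ = 0`. -/
def IsFirstHittingTime (m c k : ℝ) (τ : (Fin 2 → ℝ) → ℝ) : Prop :=
  ∀ x : Fin 2 → ℝ, x ≠ 0 → IsLeast {t : ℝ | 0 < t ∧ flow m c k t x 0 = 0} (τ x)

/-- The half-return map `P(v) = −(exp(τ((θ̂, v)) A) · (θ̂, v))₂`. -/
noncomputable def halfReturn (m c k θ : ℝ) (τ : (Fin 2 → ℝ) → ℝ) (v : ℝ) : ℝ :=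
  -(flow m c k (τ ![θ, v]) ![θ, v] 1)

/-- The dissipated energy `Diss(v) = E((θ̂, v)) − E(exp(τ((θ̂, v)) A)·(θ̂, v))`. -/
noncomputable def diss (m c k θ : ℝ) (τ : (Fin 2 → ℝ) → ℝ) (v : ℝ) : ℝ :=
  energy m k ![θ, v] - energy m k (flow m c k (τ ![θ, v]) ![θ, v])

section Aux

attribute [local instance] Matrix.linftyOpNormedRing Matrix.linftyOpNormedAlgebra

noncomputable def Lmap (x : Fin 2 → ℝ) : Matrix (Fin 2) (Fin 2) ℝ →L[ℝ] ℝ :=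
  LinearMap.toContinuousLinearMap
    { toFun := fun M => M.mulVec x 0
      map_add' := fun M N => by simp [Matrix.add_mulVec]
      map_smul' := fun r M => by simp [Matrix.smul_mulVec] }

lemma flow_deriv (m c k : ℝ) (x : Fin 2 → ℝ) (t : ℝ) :
    HasDerivAt (fun s => flow m c k s x 0) (flow m c k t x 1) t := by
  have h := hasDerivAt_exp_smul_const' (𝕂 := ℝ) (Amat m c k) t
  have h3 : HasDerivAt (fun s => flow m c k s x 0)
      ((Lmap x) (Amat m c k * NormedSpace.exp (t • Amat m c k))) t :=
    (Lmap x).hasFDerivAt.comp_hasDerivAt t h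
  convert h3 using 1
  show flow m c k t x 1 = (Amat m c k * NormedSpace.exp (t • Amat m c k)).mulVec x 0
  rw [← Matrix.mulVec_mulVec]
  show flow m c k t x 1 = (Amat m c k).mulVec (flow m c k t x) 0
  simp [Matrix.mulVec, dotProduct, Fin.sum_univ_two, Amat]

lemma flow_zero_time (m c k : ℝ) (x : Fin 2 → ℝ) : flow m c k 0 x = x := by
  simp [flow, NormedSpace.exp_zero]

lemma flow_eq_zero {m c k t : ℝ} {x : Fin 2 → ℝ} (h : flow m c k t x = 0) : x = 0 := by
  have hcomm : Commute (-(t • Amat m c k)) (t • Amat m c k) := (Commute.refl _).neg_left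
  have h1 : NormedSpace.exp (-(t • Amat m c k)) * NormedSpace.exp (t • Amat m c k) = 1 := by
    rw [← Matrix.exp_add_of_commute _ _ hcomm, neg_add_cancel, NormedSpace.exp_zero]
  calc x = ((1 : Matrix (Fin 2) (Fin 2) ℝ)).mulVec x := (Matrix.one_mulVec x).symm
    _ = (NormedSpace.exp (-(t • Amat m c k))).mulVec (flow m c k t x) := by
        rw [← h1, ← Matrix.mulVec_mulVec]; rfl
    _ = 0 := by rw [h, Matrix.mulVec_zero]

/-- under Assumption 1 and `θ̂ > 0`, the flow started at the post-jump
point `(θ̂, v)`, `v ≥ 0`, reaches the jump set `D` with strictly negative velocity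
at its first hitting time; equivalently `P(v) > 0` for every `v ≥ 0`. -/
theorem stmt4 (m c k θ : ℝ) (hm : 0 < m) (hc : 0 < c) (hk : 0 < k)
    (hud : c ^ 2 < 4 * k * m) (hθ : 0 < θ)
    (τ : (Fin 2 → ℝ) → ℝ) (hτ : IsFirstHittingTime m c k τ) :
    ∀ v : ℝ, 0 ≤ v →
      flow m c k (τ ![θ, v]) ![θ, v] 1 < 0 ∧ 0 < halfReturn m c k θ τ v := by
  intro v hv
  set x : Fin 2 → ℝ := ![θ, v] with hxdef
  have hx0 : x 0 = θ := rfl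
  have hxne : x ≠ 0 := by
    intro h
    have := congrFun h 0
    rw [hx0] at this
    exact hθ.ne' this
  obtain ⟨⟨hTpos, hhit⟩, hlb⟩ := hτ x hxne
  set T := τ x with hTdef
  set g : ℝ → ℝ := fun s => flow m c k s x 0 with hgdef
  have hg0 : g 0 = θ := by rw [hgdef]; simp only [flow_zero_time]; exact hx0
  have hgT : g T = 0 := hhit
  have hder : ∀ t, HasDerivAt g (flow m c k t x 1) t := fun t => flow_deriv m c k x t
  have hcont : Continuous g :=
    continuous_iff_continuousAt.2 fun t => (hder t).continuousAt
  -- nonnegativity on [0, T]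
  have hnonneg : ∀ t ∈ Set.Icc (0:ℝ) T, 0 ≤ g t := by
    intro t ht
    by_contra hlt
    push_neg at hlt
    have hmem : (0:ℝ) ∈ Set.Icc (g t) (g 0) := ⟨hlt.le, by rw [hg0]; exact hθ.le⟩
    obtain ⟨s, hs, hgs⟩ := intermediate_value_Icc' ht.1 hcont.continuousOn hmem
    have hspos : 0 < s := by
      rcases hs.1.lt_or_eq with h | h
      · exact h
      · exfalso; rw [← h, hg0] at hgs; exact hθ.ne' hgs
    have hTs : T ≤ s := hlb ⟨hspos, hgs⟩
    have hts : t = s := le_antisymm (ht.2.trans hTs) hs.2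
    rw [hts, hgs] at hlt
    exact lt_irrefl 0 hlt
  -- the velocity at T is ≤ 0
  set w : ℝ := flow m c k T x 1 with hwdef
  have hwle : w ≤ 0 := by
    have hdw : HasDerivWithinAt g w (Set.Iio T) T := (hder T).hasDerivWithinAt
    rw [hasDerivWithinAt_iff_tendsto_slope] at hdw
    have heq : Set.Iio T \ {T} = Set.Iio T := Set.diff_singleton_eq_self (by simp)
    rw [heq] at hdw
    refine le_of_tendsto hdw ?_
    filter_upwards [Ioo_mem_nhdsLT_of_mem ⟨hTpos, le_refl T⟩] with s hs
    have hgs : 0 ≤ g s := hnonneg s ⟨hs.1.le, hs.2.le⟩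
    have : slope g T s = g s / (s - T) := by
      rw [slope_def_field, hgT, sub_zero]
    rw [this]
    exact div_nonpos_of_nonneg_of_nonpos hgs (by linarith [hs.2])
  have hwne : w ≠ 0 := by
    intro hw0
    apply hxne
    apply flow_eq_zero (t := T)
    funext i
    fin_cases i
    · exact hhit
    · exact hw0
  have hwneg : w < 0 := lt_of_le_of_ne hwle hwne
  exact ⟨hwneg, by rw [halfReturn]; exact neg_pos.mpr hwneg⟩

end Aux
end

section
/- Under Assumption 1 and with θ̂ > 0, the first hitting time map v ↦ τ((θ̂, v)) is continuous on [0, ∞), and consequently the half-return map P : [0,∞) → ℝ, P(v) = −(exp(τ((θ̂, v)) A) · (θ̂, v))₂, is continuous on [0, ∞). -/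
section aux

open NormedSpace

attribute [local instance] Matrix.linftyOpSemiNormedRing Matrix.linftyOpNormedRing
  Matrix.linftyOpNormedAlgebra

variable (m c k : ℝ)

lemma expA_continuous : Continuous fun t : ℝ => exp (t • Amat m c k) :=
  exp_continuous.comp (continuous_id.smul continuous_const)

lemma expA_hasDerivAt (t₀ : ℝ) :
    HasDerivAt (fun t : ℝ => exp (t • Amat m c k))
      (Amat m c k * exp (t₀ • Amat m c k)) t₀ :=
  hasDerivAt_exp_smul_const' (𝕂 := ℝ) (Amat m c k) t₀

end aux

section aux2

open NormedSpace

variable (m c k : ℝ)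

lemma flow_continuous : Continuous fun p : ℝ × (Fin 2 → ℝ) => flow m c k p.1 p.2 := by
  unfold flow Matrix.mulVec dotProduct
  refine continuous_pi fun j => continuous_finset_sum _ fun i _ => Continuous.mul ?_ ?_
  · exact (continuous_apply i).comp <| (continuous_apply j).comp <|
      (expA_continuous m c k).comp continuous_fst
  · exact (continuous_apply i).comp continuous_snd

lemma flow_hasDerivAt (x : Fin 2 → ℝ) (t₀ : ℝ) :
    HasDerivAt (fun t : ℝ => flow m c k t x 0) (flow m c k t₀ x 1) t₀ := by
  classical
  letI : SeminormedRing (Matrix (Fin 2) (Fin 2) ℝ) := Matrix.linftyOpSemiNormedRing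
  letI : NormedRing (Matrix (Fin 2) (Fin 2) ℝ) := Matrix.linftyOpNormedRing
  letI : NormedAlgebra ℝ (Matrix (Fin 2) (Fin 2) ℝ) := Matrix.linftyOpNormedAlgebra
  have h := expA_hasDerivAt m c k t₀
  -- linear map M ↦ (M.mulVec x) 0
  let φlin : Matrix (Fin 2) (Fin 2) ℝ →ₗ[ℝ] ℝ :=
    { toFun := fun M => M.mulVec x 0
      map_add' := fun M N => by simp [Matrix.add_mulVec]
      map_smul' := fun r M => by simp [Matrix.smul_mulVec] }
  let φ : Matrix (Fin 2) (Fin 2) ℝ →L[ℝ] ℝ := φlin.toContinuousLinearMap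
  have h2 := φ.hasFDerivAt.comp_hasDerivAt t₀ h
  have hkey : φ (Amat m c k * exp (t₀ • Amat m c k)) = flow m c k t₀ x 1 := by
    show ((Amat m c k * exp (t₀ • Amat m c k)).mulVec x) 0 = _
    rw [← Matrix.mulVec_mulVec]
    show (Matrix.mulVec (Amat m c k) (flow m c k t₀ x)) 0 = flow m c k t₀ x 1
    simp [Amat, Matrix.mulVec, dotProduct, Fin.sum_univ_two]
  exact h2.congr_deriv hkey

lemma flow_zero (x : Fin 2 → ℝ) : flow m c k 0 x = x := by
  unfold flow
  rw [zero_smul, exp_zero, Matrix.one_mulVec]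

lemma flow_ne_zero {x : Fin 2 → ℝ} (hx : x ≠ 0) (t : ℝ) : flow m c k t x ≠ 0 := by
  intro h
  apply hx
  have hcomm : Commute ((-t) • Amat m c k) (t • Amat m c k) :=
    ((Commute.refl (Amat m c k)).smul_left (-t)).smul_right t
  have hinv : exp ((-t) • Amat m c k) * exp (t • Amat m c k) = 1 := by
    rw [← Matrix.exp_add_of_commute _ _ hcomm]
    have : (-t) • Amat m c k + t • Amat m c k = 0 := by
      rw [← add_smul]; simp
    rw [this, exp_zero]
  have := congrArg (fun M => Matrix.mulVec M x) hinv
  simp only [Matrix.one_mulVec] at this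
  rw [← Matrix.mulVec_mulVec] at this
  change (exp ((-t) • Amat m c k)).mulVec (flow m c k t x) = x at this
  rw [h] at this
  rw [← this]
  simp [Matrix.mulVec_zero]

lemma flowP_continuous (θ : ℝ) (j : Fin 2) :
    Continuous fun p : ℝ × ℝ => flow m c k p.1 ![θ, p.2] j := by
  unfold flow Matrix.mulVec dotProduct
  refine continuous_finset_sum _ fun i _ => Continuous.mul ?_ ?_
  · exact (continuous_apply i).comp <| (continuous_apply j).comp <|
      (expA_continuous m c k).comp continuous_fst
  · fin_cases i
    · simpa using continuous_const
    · simpa using continuous_snd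

end aux2

section main

open Filter Topology Set

variable {m c k θ : ℝ}

lemma vec_ne_zero (hθ : 0 < θ) (v : ℝ) : (![θ, v] : Fin 2 → ℝ) ≠ 0 := by
  intro h
  have := congrFun h 0
  simp at this
  exact hθ.ne' this

/-- Continuity of the hitting time map (on all of ℝ). -/
lemma tau_continuous (hθ : 0 < θ) (τ : (Fin 2 → ℝ) → ℝ)
    (hτ : IsFirstHittingTime m c k τ) :
    Continuous fun v : ℝ => τ ![θ, v] := by
  set F : ℝ × ℝ → ℝ := fun p => flow m c k p.1 ![θ, p.2] 0 with hFdef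
  have hF : Continuous F := flowP_continuous m c k θ 0
  rw [continuous_iff_continuousAt]
  intro v₀
  obtain ⟨⟨ht₀pos, ht₀zero⟩, ht₀least⟩ := hτ ![θ, v₀] (vec_ne_zero hθ v₀)
  set t₀ := τ ![θ, v₀] with ht₀def
  set f : ℝ → ℝ := fun t => F (t, v₀) with hfdef
  have hfc : Continuous f := hF.comp (continuous_id.prodMk continuous_const)
  have hf0 : f 0 = θ := by
    show flow m c k 0 ![θ, v₀] 0 = θ
    rw [flow_zero]; simp
  -- f is positive on [0, t₀)
  have hpos : ∀ t ∈ Ico (0:ℝ) t₀, 0 < f t := by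
    intro t ⟨ht0, htlt⟩
    by_contra hle
    push_neg at hle
    rcases lt_or_eq_of_le hle with hlt | heq
    · -- f t < 0 : IVT gives a zero in (0, t)
      have h0t : (0:ℝ) < t := by
        rcases ht0.eq_or_lt with h | h
        · exfalso; rw [← h, hf0] at hlt; linarith
        · exact h
      have : (0:ℝ) ∈ Ioo (f t) (f 0) := by rw [hf0]; exact ⟨hlt, hθ⟩
      have := intermediate_value_Ioo' h0t.le hfc.continuousOn this
      obtain ⟨s, ⟨hs0, hst⟩, hfs⟩ := this
      have : t₀ ≤ s := ht₀least ⟨hs0, hfs⟩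
      linarith
    · have : t₀ ≤ t := ht₀least ⟨by
        rcases ht0.eq_or_lt with h | h
        · exfalso; rw [← h, hf0] at heq; linarith
        · exact h, heq⟩
      linarith
  -- derivative at t₀ is negative
  have hd : HasDerivAt f (flow m c k t₀ ![θ, v₀] 1) t₀ := by
    rw [hfdef, hFdef]; exact flow_hasDerivAt m c k ![θ, v₀] t₀
  have hGne : flow m c k t₀ ![θ, v₀] 1 ≠ 0 := by
    intro h
    apply flow_ne_zero m c k (vec_ne_zero hθ v₀) t₀
    funext i
    fin_cases i
    · exact ht₀zero
    · exact h
  have hGle : flow m c k t₀ ![θ, v₀] 1 ≤ 0 := by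
    have hslope := hasDerivAt_iff_tendsto_slope.mp hd
    have hslope' : Tendsto (slope f t₀) (𝓝[<] t₀) (𝓝 (flow m c k t₀ ![θ, v₀] 1)) :=
      hslope.mono_left (nhdsWithin_mono _ fun x hx => ne_of_lt hx)
    refine le_of_tendsto hslope' ?_
    filter_upwards [Ioo_mem_nhdsLT ht₀pos] with t ht
    have hft : 0 < f t := hpos t ⟨ht.1.le, ht.2⟩
    rw [slope_def_field]
    apply div_nonpos_of_nonneg_of_nonpos
    · have hz : f t₀ = 0 := ht₀zero
      rw [hz]; linarith
    · linarith [ht.2]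
  have hGneg : flow m c k t₀ ![θ, v₀] 1 < 0 := lt_of_le_of_ne hGle hGne
  -- eventually negative just after t₀
  have hafter : ∀ᶠ t in 𝓝[>] t₀, f t < 0 := by
    have hslope := hasDerivAt_iff_tendsto_slope.mp hd
    have hslope' : Tendsto (slope f t₀) (𝓝[>] t₀) (𝓝 (flow m c k t₀ ![θ, v₀] 1)) :=
      hslope.mono_left (nhdsWithin_mono _ fun x hx => ne_of_gt hx)
    have hev : ∀ᶠ t in 𝓝[>] t₀, slope f t₀ t < 0 :=
      hslope'.eventually (eventually_lt_nhds hGneg)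
    filter_upwards [hev, self_mem_nhdsWithin] with t hst (htgt : t₀ < t)
    rw [slope_def_field] at hst
    have ht₀z : f t₀ = 0 := ht₀zero
    have := mul_neg_of_neg_of_pos hst (sub_pos.mpr htgt)
    rw [div_mul_cancel₀ _ (by linarith : t - t₀ ≠ 0)] at this
    linarith
  -- now continuity at v₀ via order topology
  rw [ContinuousAt, ← ht₀def]
  rw [tendsto_order]
  constructor
  · -- lower bound: b < t₀ ⇒ eventually b < τ
    intro b hb
    rcases le_or_gt b 0 with hb0 | hb0
    · filter_upwards with v
      exact lt_of_le_of_lt hb0 (hτ ![θ, v] (vec_ne_zero hθ v)).1.1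
    · -- tube lemma on K = Icc 0 b
      have hK : IsCompact (Icc (0:ℝ) b) := isCompact_Icc
      have htube : ∀ᶠ v in 𝓝 v₀, ∀ t ∈ Icc (0:ℝ) b, 0 < F (t, v) := by
        apply hK.eventually_forall_of_forall_eventually
        intro t ht
        have hopen : IsOpen {z : ℝ × ℝ | 0 < F (z.2, z.1)} :=
          isOpen_lt continuous_const (hF.comp (continuous_snd.prodMk continuous_fst))
        have hmem : (v₀, t) ∈ {z : ℝ × ℝ | 0 < F (z.2, z.1)} :=
          hpos t ⟨ht.1, lt_of_le_of_lt ht.2 hb⟩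
        exact hopen.mem_nhds hmem
      filter_upwards [htube] with v hv
      obtain ⟨⟨hvpos, hvzero⟩, _⟩ := hτ ![θ, v] (vec_ne_zero hθ v)
      by_contra hle
      push_neg at hle
      have := hv (τ ![θ, v]) ⟨hvpos.le, hle⟩
      simp only [hFdef, hvzero] at this
      exact lt_irrefl 0 this
  · -- upper bound: t₀ < b ⇒ eventually τ < b
    intro b hb
    obtain ⟨s, hs, hfs⟩ : ∃ s, s ∈ Ioo t₀ b ∧ f s < 0 := by
      have h1 : ∀ᶠ t in 𝓝[>] t₀, t ∈ Ioo t₀ b ∧ f t < 0 := by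
        filter_upwards [hafter, Ioo_mem_nhdsGT hb] with t h1 h2
        exact ⟨h2, h1⟩
      exact (h1.exists).imp fun s hs => ⟨hs.1, hs.2⟩
    have hsc : Continuous fun v => F (s, v) := hF.comp (continuous_const.prodMk continuous_id)
    have hev : ∀ᶠ v in 𝓝 v₀, F (s, v) < 0 :=
      (hsc.continuousAt).eventually_lt continuousAt_const hfs
    filter_upwards [hev] with v hv
    obtain ⟨⟨hvpos, hvzero⟩, hvleast⟩ := hτ ![θ, v] (vec_ne_zero hθ v)
    -- IVT: zero of F(·, v) in (0, s)
    have hcv : ContinuousOn (fun t => F (t, v)) (Icc 0 s) :=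
      (hF.comp (continuous_id.prodMk continuous_const)).continuousOn
    have hF0 : F (0, v) = θ := by
      show flow m c k 0 ![θ, v] 0 = θ
      rw [flow_zero]; simp
    have hspos : (0:ℝ) < s := lt_trans ht₀pos hs.1
    have hmem : (0:ℝ) ∈ Ioo (F (s, v)) (F (0, v)) := by rw [hF0]; exact ⟨hv, hθ⟩
    obtain ⟨t, ⟨ht1, ht2⟩, htz⟩ := intermediate_value_Ioo' hspos.le hcv hmem
    have : τ ![θ, v] ≤ t := hvleast ⟨ht1, htz⟩
    exact lt_of_le_of_lt this (lt_trans ht2 hs.2)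
end main

/-- under Assumption 1 and `θ̂ > 0`, the first hitting time map
`v ↦ τ((θ̂, v))` is continuous on `[0, ∞)`, and consequently the half-return map
`P` is continuous on `[0, ∞)`. -/
theorem stmt6 (m c k θ : ℝ) (hm : 0 < m) (hc : 0 < c) (hk : 0 < k)
    (hud : c ^ 2 < 4 * k * m) (hθ : 0 < θ)
    (τ : (Fin 2 → ℝ) → ℝ) (hτ : IsFirstHittingTime m c k τ) :
    ContinuousOn (fun v : ℝ => τ ![θ, v]) (Set.Ici 0) ∧
    ContinuousOn (halfReturn m c k θ τ) (Set.Ici 0) := by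
  have h1 : Continuous fun v : ℝ => τ ![θ, v] := tau_continuous hθ τ hτ
  have h2 : Continuous (halfReturn m c k θ τ) := by
    have hG : Continuous fun p : ℝ × ℝ => flow m c k p.1 ![θ, p.2] 1 :=
      flowP_continuous m c k θ 1
    have hcomp : Continuous fun v : ℝ =>
        (fun p : ℝ × ℝ => flow m c k p.1 ![θ, p.2] 1) (τ ![θ, v], v) :=
      hG.comp ((tau_continuous hθ τ hτ).prodMk continuous_id)
    simp only [] at hcomp
    unfold halfReturn
    exact hcomp.neg
  exact ⟨h1.continuousOn, h2.continuousOn⟩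
end

section
/- (Monotonicity of dissipation.) Under Assumption 1 and with θ̂ > 0, the energy dissipated along the flow from the post-jump point (θ̂, v) until its first intersection with the jump set D, namely Diss(v) = E((θ̂, v)) − E(exp(τ((θ̂, v)) A) · (θ̂, v)), is a strictly increasing function of v on [0, ∞). -/
open NormedSpace

/-! ### Auxiliary development -/

theorem exp_rot {n : Type*} [Fintype n] [DecidableEq n] (s w : ℝ) (hw : w ≠ 0)
    (B : Matrix n n ℝ) (hB : B * B = (-(w^2)) • 1) :
    exp (s • (1 : Matrix n n ℝ) + B)
      = Real.exp s • (Real.cos w • (1 : Matrix n n ℝ) + (Real.sin w / w) • B) := by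
  letI : SeminormedRing (Matrix n n ℝ) := Matrix.linftyOpSemiNormedRing
  letI : NormedRing (Matrix n n ℝ) := Matrix.linftyOpNormedRing
  letI : NormedAlgebra ℝ (Matrix n n ℝ) := Matrix.linftyOpNormedAlgebra
  have hI : (w⁻¹ • B) * (w⁻¹ • B) = -1 := by
    rw [smul_mul_smul_comm, hB, smul_smul]
    have : (w⁻¹ * w⁻¹ * -w ^ 2) = -1 := by field_simp
    rw [this, neg_smul, one_smul]
  set φ : ℂ →ₐ[ℝ] Matrix n n ℝ := Complex.liftAux (w⁻¹ • B) hI with hφ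
  have hcont : Continuous φ := LinearMap.continuous_of_finiteDimensional (φ.toLinearMap)
  have hB' : φ ((w : ℂ) * Complex.I) = B := by
    rw [hφ, Complex.liftAux_apply]
    simp [smul_smul, hw]
  have hexp' : exp ((w : ℂ) * Complex.I) = Complex.exp ((w:ℂ) * Complex.I) :=
    (congrFun Complex.exp_eq_exp_ℂ _).symm
  have hexpB : exp B = Real.cos w • (1 : Matrix n n ℝ) + (Real.sin w / w) • B := by
    rw [← hB']; erw [← map_exp φ hcont]; rw [hexp', Complex.exp_mul_I,
      ← Complex.ofReal_cos, ← Complex.ofReal_sin, hφ, Complex.liftAux_apply]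
    simp [Algebra.algebraMap_eq_smul_one, smul_smul, div_eq_mul_inv,
      Complex.cos_ofReal_re, Complex.sin_ofReal_re, mul_inv_cancel₀ hw]
  have hcomm : Commute (s • (1 : Matrix n n ℝ)) B := by
    simp [Commute, SemiconjBy]
  rw [Matrix.exp_add_of_commute _ _ hcomm, hexpB]
  have h1 : exp (s • (1 : Matrix n n ℝ)) = Real.exp s • (1 : Matrix n n ℝ) := by
    have h2 : s • (1 : Matrix n n ℝ) = algebraMap ℝ (Matrix n n ℝ) s := by
      simp [Algebra.algebraMap_eq_smul_one]
    rw [h2]; erw [← algebraMap_exp_comm]; rw [← Real.exp_eq_exp_ℝ, Algebra.algebraMap_eq_smul_one]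
  rw [h1, smul_mul_assoc, one_mul]

noncomputable def sg (m c : ℝ) : ℝ := c / (2 * m)
noncomputable def om (m c k : ℝ) : ℝ := Real.sqrt (k / m - (c / (2 * m)) ^ 2)
noncomputable def Bm (m c k : ℝ) : Matrix (Fin 2) (Fin 2) ℝ :=
  ![![c / (2 * m), 1], ![-(k / m), -(c / (2 * m))]]

section
variable {m c k : ℝ} (hm : 0 < m) (hc : 0 < c) (hk : 0 < k) (hud : c ^ 2 < 4 * k * m)
include hm hc hk hud

set_option linter.unusedSectionVars false

theorem om_sq : om m c k ^ 2 = k / m - sg m c ^ 2 := by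
  rw [om, sg, Real.sq_sqrt]
  rw [div_pow, sub_nonneg, div_le_div_iff₀ (by positivity) hm]
  nlinarith

theorem om_pos : 0 < om m c k := by
  rw [om]
  apply Real.sqrt_pos.2
  have : (c / (2 * m)) ^ 2 = c ^ 2 / (4 * m ^ 2) := by ring
  rw [this, sub_pos, div_lt_div_iff₀ (by positivity) hm]
  nlinarith

theorem sg_pos : 0 < sg m c := by rw [sg]; positivity

theorem km_eq : k / m = sg m c ^ 2 + om m c k ^ 2 := by
  rw [om_sq hm hc hk hud]; ring

theorem BmBm : Bm m c k * Bm m c k = (-(om m c k ^ 2)) • (1 : Matrix (Fin 2) (Fin 2) ℝ) := by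
  rw [om_sq hm hc hk hud, sg]
  ext i j
  simp only [Matrix.mul_apply, Fin.sum_univ_two]
  fin_cases i <;> fin_cases j <;>
    simp [Bm, Matrix.mul_apply, Fin.sum_univ_two, Matrix.one_apply] <;> ring

theorem smul_Amat (t : ℝ) :
    t • Amat m c k = (-(sg m c * t)) • (1 : Matrix (Fin 2) (Fin 2) ℝ) + t • Bm m c k := by
  ext i j
  simp only [Matrix.add_apply, Matrix.smul_apply]
  fin_cases i <;> fin_cases j <;>
    simp [Amat, Bm, sg, Matrix.one_apply] <;> field_simp <;> ring

theorem expA (t : ℝ) :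
    exp (t • Amat m c k)
      = Real.exp (-(sg m c * t)) • (Real.cos (om m c k * t) • (1 : Matrix (Fin 2) (Fin 2) ℝ)
          + (Real.sin (om m c k * t) / om m c k) • Bm m c k) := by
  rcases eq_or_ne t 0 with rfl | ht
  · simp [exp_zero]
  · rw [smul_Amat hm hc hk hud]
    have hw : om m c k * t ≠ 0 := mul_ne_zero (om_pos hm hc hk hud).ne' ht
    have hBB : (t • Bm m c k) * (t • Bm m c k) = (-((om m c k * t)^2)) • 1 := by
      rw [smul_mul_smul_comm, BmBm hm hc hk hud, smul_smul]
      congr 1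
      ring
    rw [exp_rot (-(sg m c * t)) (om m c k * t) hw _ hBB]
    congr 1
    rw [smul_smul]
    congr 1
    rw [div_mul_eq_mul_div, mul_comm (Real.sin (om m c k * t)) t, mul_comm (om m c k) t,
      mul_div_mul_left _ _ ht]

theorem flow_zero_s7 (t : ℝ) (x : Fin 2 → ℝ) :
    flow m c k t x 0 = Real.exp (-(sg m c * t)) *
      (Real.cos (om m c k * t) * x 0 + Real.sin (om m c k * t) / om m c k * (sg m c * x 0 + x 1)) := by
  rw [flow, expA hm hc hk hud]
  simp only [Matrix.mulVec, dotProduct, Fin.sum_univ_two, Matrix.smul_apply, Matrix.add_apply]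
  simp [Matrix.mulVec, dotProduct, Fin.sum_univ_two, Bm, Matrix.one_apply, sg, Matrix.smul_apply]
  ring

theorem flow_one (t : ℝ) (x : Fin 2 → ℝ) :
    flow m c k t x 1 = Real.exp (-(sg m c * t)) *
      (Real.cos (om m c k * t) * x 1 + Real.sin (om m c k * t) / om m c k *
        (-(k / m) * x 0 - sg m c * x 1)) := by
  rw [flow, expA hm hc hk hud]
  simp only [Matrix.mulVec, dotProduct, Fin.sum_univ_two, Matrix.smul_apply, Matrix.add_apply]
  simp [Matrix.mulVec, dotProduct, Fin.sum_univ_two, Bm, Matrix.one_apply, sg, Matrix.smul_apply]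
  ring

end

/-! ### Hitting time for the post-jump point -/

noncomputable def aa (m c k θ v : ℝ) : ℝ := (sg m c * θ + v) / om m c k
noncomputable def RR (m c k θ v : ℝ) : ℝ := Real.sqrt (θ ^ 2 + aa m c k θ v ^ 2)
noncomputable def dd (m c k θ v : ℝ) : ℝ := Real.arctan (θ / aa m c k θ v)
noncomputable def ts (m c k θ v : ℝ) : ℝ := (Real.pi - dd m c k θ v) / om m c k

section
variable {m c k θ v : ℝ} (hm : 0 < m) (hc : 0 < c) (hk : 0 < k) (hud : c ^ 2 < 4 * k * m)
  (hθ : 0 < θ) (hv : 0 ≤ v)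
include hm hc hk hud hθ hv

set_option linter.unusedSectionVars false

theorem aa_pos : 0 < aa m c k θ v := by
  rw [aa]
  exact div_pos (by nlinarith [sg_pos hm hc hk hud]) (om_pos hm hc hk hud)

theorem RR_pos : 0 < RR m c k θ v := by
  rw [RR]; positivity

theorem dd_pos : 0 < dd m c k θ v := by
  rw [dd, ← Real.arctan_zero]
  exact Real.arctan_strictMono (div_pos hθ (aa_pos hm hc hk hud hθ hv))

theorem dd_lt : dd m c k θ v < Real.pi / 2 := Real.arctan_lt_pi_div_two _

theorem cos_dd : Real.cos (dd m c k θ v) = aa m c k θ v / RR m c k θ v := by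
  have ha := aa_pos hm hc hk hud hθ hv
  rw [dd, Real.cos_arctan]
  have h1 : Real.sqrt (1 + (θ / aa m c k θ v) ^ 2) = RR m c k θ v / aa m c k θ v := by
    rw [RR, show 1 + (θ / aa m c k θ v) ^ 2 = (θ ^ 2 + aa m c k θ v ^ 2) / aa m c k θ v ^ 2 by
      field_simp; ring]
    rw [Real.sqrt_div (by positivity), Real.sqrt_sq ha.le]
  rw [h1, one_div_div]

theorem sin_dd : Real.sin (dd m c k θ v) = θ / RR m c k θ v := by
  have ha := aa_pos hm hc hk hud hθ hv
  rw [dd, Real.sin_arctan]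
  have h1 : Real.sqrt (1 + (θ / aa m c k θ v) ^ 2) = RR m c k θ v / aa m c k θ v := by
    rw [RR, show 1 + (θ / aa m c k θ v) ^ 2 = (θ ^ 2 + aa m c k θ v ^ 2) / aa m c k θ v ^ 2 by
      field_simp; ring]
    rw [Real.sqrt_div (by positivity), Real.sqrt_sq ha.le]
  have hR := RR_pos hm hc hk hud hθ hv
  rw [h1]
  rw [div_div_div_eq, mul_comm θ (aa m c k θ v), mul_div_mul_left _ _ ha.ne']

theorem flow0_eq (t : ℝ) :
    flow m c k t ![θ, v] 0 = Real.exp (-(sg m c * t)) *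
      (RR m c k θ v * Real.sin (om m c k * t + dd m c k θ v)) := by
  have hR := RR_pos hm hc hk hud hθ hv
  have hω := om_pos hm hc hk hud
  rw [flow_zero_s7 hm hc hk hud]
  congr 1
  have h0 : (![θ, v] : Fin 2 → ℝ) 0 = θ := rfl
  have h1 : (![θ, v] : Fin 2 → ℝ) 1 = v := rfl
  rw [h0, h1, Real.sin_add, cos_dd hm hc hk hud hθ hv, sin_dd hm hc hk hud hθ hv]
  have haw : aa m c k θ v * om m c k = sg m c * θ + v := by
    rw [aa]; field_simp
  rw [← haw]
  field_simp
  ring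

theorem omts : om m c k * ts m c k θ v = Real.pi - dd m c k θ v := by
  rw [ts, mul_div_cancel₀ _ (om_pos hm hc hk hud).ne']

theorem ts_pos : 0 < ts m c k θ v := by
  rw [ts]
  apply div_pos _ (om_pos hm hc hk hud)
  have := dd_lt hm hc hk hud hθ hv (v := v)
  linarith [Real.pi_pos]

theorem isLeast_ts :
    IsLeast {t : ℝ | 0 < t ∧ flow m c k t ![θ, v] 0 = 0} (ts m c k θ v) := by
  have hω := om_pos hm hc hk hud
  have hR := RR_pos hm hc hk hud hθ hv
  have hd0 := dd_pos hm hc hk hud hθ hv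
  have hdlt := dd_lt hm hc hk hud hθ hv (v := v)
  constructor
  · refine ⟨ts_pos hm hc hk hud hθ hv, ?_⟩
    rw [flow0_eq hm hc hk hud hθ hv, omts hm hc hk hud hθ hv]
    simp [Real.sin_pi_sub, sub_add_cancel]
  · rintro t ⟨ht, hflow⟩
    rw [flow0_eq hm hc hk hud hθ hv] at hflow
    have hsin : Real.sin (om m c k * t + dd m c k θ v) = 0 := by
      have := Real.exp_ne_zero (-(sg m c * t))
      rcases mul_eq_zero.1 hflow with h | h
      · exact absurd h this
      · rcases mul_eq_zero.1 h with h' | h'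
        · exact absurd h' hR.ne'
        · exact h'
    obtain ⟨n, hn⟩ := Real.sin_eq_zero_iff.1 hsin
    have hpos : 0 < om m c k * t + dd m c k θ v := by positivity
    have hn1 : (1 : ℤ) ≤ n := by
      by_contra h
      push_neg at h
      have : (n : ℝ) ≤ 0 := by exact_mod_cast Int.lt_add_one_iff.mp h
      nlinarith [Real.pi_pos, hn]
    have : Real.pi ≤ om m c k * t + dd m c k θ v := by
      rw [← hn]
      calc Real.pi = (1 : ℝ) * Real.pi := (one_mul _).symm
        _ ≤ (n : ℝ) * Real.pi := by
            apply mul_le_mul_of_nonneg_right _ Real.pi_pos.le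
            exact_mod_cast hn1
    rw [ts, div_le_iff₀ hω]
    linarith [this]

theorem x_ne : (![θ, v] : Fin 2 → ℝ) ≠ 0 := by
  intro h
  have : (![θ, v] : Fin 2 → ℝ) 0 = 0 := by rw [h]; rfl
  simp at this
  exact hθ.ne' this

theorem flow1_ts :
    flow m c k (ts m c k θ v) ![θ, v] 1
      = -(Real.exp (-(sg m c * ts m c k θ v)) * (om m c k * RR m c k θ v)) := by
  have hω := om_pos hm hc hk hud
  have hR := RR_pos hm hc hk hud hθ hv
  rw [flow_one hm hc hk hud, omts hm hc hk hud hθ hv, Real.cos_pi_sub, Real.sin_pi_sub,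
    cos_dd hm hc hk hud hθ hv, sin_dd hm hc hk hud hθ hv]
  have h0 : (![θ, v] : Fin 2 → ℝ) 0 = θ := rfl
  have h1 : (![θ, v] : Fin 2 → ℝ) 1 = v := rfl
  rw [h0, h1]
  rw [← neg_mul]
  congr 1
  have haw : aa m c k θ v * om m c k = sg m c * θ + v := by rw [aa]; field_simp
  have hR2 : RR m c k θ v ^ 2 = θ ^ 2 + aa m c k θ v ^ 2 := Real.sq_sqrt (by positivity)
  have hkm := km_eq hm hc hk hud
  rw [hkm]
  field_simp
  linear_combination (om m c k ^ 2) * hR2 +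
    (aa m c k θ v * om m c k + sg m c * θ) * haw

end

/-! ### Explicit dissipation function -/

noncomputable def Gfun (m c k θ : ℝ) (v : ℝ) : ℝ :=
  (1/2)*m*v^2 + (1/2)*k*θ^2 - (1/2*m) * (((v + sg m c*θ)^2 + (om m c k)^2*θ^2) *
    Real.exp (-(2*sg m c/om m c k) *
      (Real.pi - Real.arctan (om m c k*θ/(v + sg m c*θ)))))

section
variable {m c k θ v : ℝ} (hm : 0 < m) (hc : 0 < c) (hk : 0 < k) (hud : c ^ 2 < 4 * k * m)
  (hθ : 0 < θ) (hv : 0 ≤ v)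
include hm hc hk hud hθ hv

set_option linter.unusedSectionVars false

theorem diss_eq (τ : (Fin 2 → ℝ) → ℝ) (hτ : IsFirstHittingTime m c k τ) :
    diss m c k θ τ v = Gfun m c k θ v := by
  have hω := om_pos hm hc hk hud
  have hσ := sg_pos hm hc hk hud
  have hsv : 0 < v + sg m c * θ := by nlinarith
  have hts := isLeast_ts hm hc hk hud hθ hv
  have htau : τ ![θ, v] = ts m c k θ v := (hτ _ (x_ne hm hc hk hud hθ hv)).unique hts
  have hflow0 : flow m c k (ts m c k θ v) ![θ, v] 0 = 0 := hts.1.2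
  have hflow1 := flow1_ts hm hc hk hud hθ hv
  rw [diss, energy, energy, htau, hflow0, hflow1]
  have h0 : (![θ, v] : Fin 2 → ℝ) 0 = θ := rfl
  have h1 : (![θ, v] : Fin 2 → ℝ) 1 = v := rfl
  rw [h0, h1, Gfun]
  have harctan : Real.arctan (om m c k * θ / (v + sg m c * θ)) = dd m c k θ v := by
    rw [dd, aa]
    congr 1
    rw [div_div_eq_mul_div]
    rw [mul_comm θ (om m c k), add_comm (sg m c * θ) v]
  have haw : aa m c k θ v * om m c k = sg m c * θ + v := by rw [aa]; field_simp
  have hR2 : RR m c k θ v ^ 2 = θ ^ 2 + aa m c k θ v ^ 2 := Real.sq_sqrt (by positivity)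
  have hexp2 : Real.exp (-(sg m c * ts m c k θ v)) ^ 2
      = Real.exp (-(2*sg m c/om m c k) * (Real.pi - dd m c k θ v)) := by
    rw [sq, ← Real.exp_add, ts]
    congr 1
    field_simp
    ring
  have hwr : (om m c k * RR m c k θ v) ^ 2
      = (v + sg m c * θ)^2 + (om m c k)^2 * θ^2 := by
    have h := haw
    nlinarith [hR2, haw]
  have key : (-(Real.exp (-(sg m c * ts m c k θ v)) * (om m c k * RR m c k θ v))) ^ 2
      = ((v + sg m c * θ)^2 + (om m c k)^2 * θ^2) *
        Real.exp (-(2*sg m c/om m c k) * (Real.pi - dd m c k θ v)) := by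
    rw [neg_sq, mul_pow, hexp2, hwr]
    ring
  rw [harctan, key]
  ring

end

theorem Gmono_aux (m k σ ω θ : ℝ) (hm : 0 < m) (hσ : 0 < σ) (hω : 0 < ω) (hθ : 0 < θ) :
    StrictMonoOn (fun v => (1/2)*m*v^2 + (1/2)*k*θ^2 - (1/2*m) * (((v + σ*θ)^2 + ω^2*θ^2) *
      Real.exp (-(2*σ/ω) * (Real.pi - Real.arctan (ω*θ/(v + σ*θ)))))) (Set.Ici 0) := by
  set G : ℝ → ℝ := fun v => (1/2)*m*v^2 + (1/2)*k*θ^2 - (1/2*m) * (((v + σ*θ)^2 + ω^2*θ^2) *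
      Real.exp (-(2*σ/ω) * (Real.pi - Real.arctan (ω*θ/(v + σ*θ))))) with hG
  have hderiv : ∀ v : ℝ, 0 ≤ v → HasDerivAt G
      (m * v * (1 - Real.exp (-(2*σ/ω) * (Real.pi - Real.arctan (ω*θ/(v + σ*θ)))))) v := by
    intro v hv
    have hp : 0 < v + σ*θ := by nlinarith
    have h1 : HasDerivAt (fun v : ℝ => v + σ*θ) 1 v := (hasDerivAt_id v).add_const _
    have h2 : HasDerivAt (fun v : ℝ => ω*θ/(v + σ*θ)) (-(ω*θ)/(v + σ*θ)^2) v := by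
      have h := (hasDerivAt_const v (ω*θ)).div h1 hp.ne'
      refine h.congr_deriv ?_
      field_simp
      ring
    have h3 : HasDerivAt (fun v : ℝ => Real.arctan (ω*θ/(v + σ*θ)))
        (1/(1+(ω*θ/(v + σ*θ))^2) * (-(ω*θ)/(v + σ*θ)^2)) v :=
      (Real.hasDerivAt_arctan _).comp v h2
    have h4 : HasDerivAt (fun v : ℝ => -(2*σ/ω) * (Real.pi - Real.arctan (ω*θ/(v + σ*θ))))
        (-(2*σ/ω) * (0 - 1/(1+(ω*θ/(v + σ*θ))^2) * (-(ω*θ)/(v + σ*θ)^2))) v := by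
      exact (((hasDerivAt_const v Real.pi).sub h3).const_mul _)
    have h5 : HasDerivAt (fun v : ℝ =>
        Real.exp (-(2*σ/ω) * (Real.pi - Real.arctan (ω*θ/(v + σ*θ)))))
        (Real.exp (-(2*σ/ω) * (Real.pi - Real.arctan (ω*θ/(v + σ*θ)))) *
          (-(2*σ/ω) * (0 - 1/(1+(ω*θ/(v + σ*θ))^2) * (-(ω*θ)/(v + σ*θ)^2)))) v :=
      (Real.hasDerivAt_exp _).comp v h4
    have h6 : HasDerivAt (fun v : ℝ => ((v + σ*θ)^2 + ω^2*θ^2)) (2*(v + σ*θ)) v := by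
      have h := (h1.pow 2).add_const (ω^2*θ^2)
      refine h.congr_deriv ?_
      ring
    have h7 := h6.mul h5
    have h8 : HasDerivAt (fun v : ℝ => (1/2)*m*v^2) ((1/2)*m*(2*v)) v := by
      have h := (hasDerivAt_pow 2 v).const_mul ((1/2)*m)
      refine h.congr_deriv ?_
      ring
    have h9 := ((h8.add_const ((1/2)*k*θ^2)).sub (h7.const_mul (1/2*m)))
    refine h9.congr_deriv ?_
    have hQ : (0:ℝ) < (v + σ*θ)^2 + ω^2*θ^2 := by positivity
    have hu : 1 + (ω*θ/(v + σ*θ))^2 = ((v + σ*θ)^2 + ω^2*θ^2) / (v + σ*θ)^2 := by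
      field_simp
    rw [hu]
    field_simp
    ring
  apply strictMonoOn_of_deriv_pos (convex_Ici 0)
  · intro x hx
    exact (hderiv x hx).continuousAt.continuousWithinAt
  · intro x hx
    rw [interior_Ici] at hx
    have hx' : 0 < x := hx
    rw [(hderiv x hx'.le).deriv]
    have hp : 0 < x + σ*θ := by nlinarith
    have hlt : Real.exp (-(2*σ/ω) * (Real.pi - Real.arctan (ω*θ/(x + σ*θ)))) < 1 := by
      apply Real.exp_lt_one_iff.2
      have h1 : Real.arctan (ω*θ/(x + σ*θ)) < Real.pi / 2 := Real.arctan_lt_pi_div_two _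
      have h2 : 0 < Real.pi - Real.arctan (ω*θ/(x + σ*θ)) := by linarith [Real.pi_pos]
      have h3 : 0 < 2*σ/ω := by positivity
      nlinarith
    have := mul_pos hm hx'
    nlinarith

/-- monotonicity of dissipation: under Assumption 1 and `θ̂ > 0`,
the energy `Diss(v)` dissipated along the flow from the post-jump point `(θ̂, v)`
until its first intersection with the jump set `D` is a strictly increasing
function of `v` on `[0, ∞)`. -/
theorem stmt7 (m c k θ : ℝ) (hm : 0 < m) (hc : 0 < c) (hk : 0 < k)
    (hud : c ^ 2 < 4 * k * m) (hθ : 0 < θ)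
    (τ : (Fin 2 → ℝ) → ℝ) (hτ : IsFirstHittingTime m c k τ) :
    StrictMonoOn (diss m c k θ τ) (Set.Ici 0) := by
  intro v1 hv1 v2 hv2 h12
  rw [Set.mem_Ici] at hv1 hv2
  rw [diss_eq hm hc hk hud hθ hv1 τ hτ, diss_eq hm hc hk hud hθ hv2 τ hτ]
  exact Gmono_aux m k (sg m c) (om m c k) θ hm (sg_pos hm hc hk hud)
    (om_pos hm hc hk hud) hθ hv1 hv2 h12
end

section
/- Under Assumption 1 and with θ̂ > 0, the half-return map P is strictly increasing on [0, ∞): for all 0 ≤ v < v', P(v) < P(v'). (This follows from the nesting of flow trajectories guaranteed by uniqueness of solutions of the linear flow.) -/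
/- ------------------------------------------------------------------ -/
/- Auxiliary development                                               -/
/- ------------------------------------------------------------------ -/

open Real

set_option linter.unusedTactic false
set_option linter.unreachableTactic false
set_option linter.unusedVariables false

/-- abstract damped-oscillator matrix, `a = c/(2m)`, `w` the damped frequency. -/
noncomputable def A2 (a w : ℝ) : Matrix (Fin 2) (Fin 2) ℝ :=
  ![![0, 1], ![-(a^2+w^2), -(2*a)]]

/-- the explicit matrix exponential of `t • A2 a w`. -/
noncomputable def Mm (a w t : ℝ) : Matrix (Fin 2) (Fin 2) ℝ :=
  ![![Real.exp (-(a*t)) * (1 * Real.cos (w*t) + (a/w) * Real.sin (w*t)),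
      Real.exp (-(a*t)) * (0 * Real.cos (w*t) + (1/w) * Real.sin (w*t))],
    ![Real.exp (-(a*t)) * (0 * Real.cos (w*t) + (-((a^2+w^2)/w)) * Real.sin (w*t)),
      Real.exp (-(a*t)) * (1 * Real.cos (w*t) + (-(a/w)) * Real.sin (w*t))]]

lemma expcos_deriv (a w p q t : ℝ) :
    HasDerivAt (fun t => Real.exp (-(a*t)) * (p * Real.cos (w*t) + q * Real.sin (w*t)))
      (Real.exp (-(a*t)) * ((q*w - a*p) * Real.cos (w*t) + (-(p*w) - a*q) * Real.sin (w*t))) t := by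
  have h1 : HasDerivAt (fun t : ℝ => -(a*t)) (-a) t := by
    simpa [Pi.neg_def] using ((hasDerivAt_id t).const_mul a).neg
  have hE : HasDerivAt (fun t : ℝ => Real.exp (-(a*t))) (Real.exp (-(a*t)) * (-a)) t := h1.exp
  have h2 : HasDerivAt (fun t : ℝ => w*t) w t := by simpa using (hasDerivAt_id t).const_mul w
  have hC : HasDerivAt (fun t : ℝ => Real.cos (w*t)) (-Real.sin (w*t) * w) t := h2.cos
  have hS : HasDerivAt (fun t : ℝ => Real.sin (w*t)) (Real.cos (w*t) * w) t := h2.sin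
  have h := hE.mul ((hC.const_mul p).add (hS.const_mul q))
  refine h.congr_deriv ?_
  simp only [Pi.add_apply]
  ring

lemma hasDerivAt_Mm (a w : ℝ) (hw : w ≠ 0) (i j : Fin 2) (t : ℝ) :
    HasDerivAt (fun t => Mm a w t i j) ((A2 a w * Mm a w t) i j) t := by
  fin_cases i <;> fin_cases j <;> rw [Matrix.mul_apply] <;>
    simp only [Mm, A2, Matrix.mul_apply, Fin.sum_univ_two, Matrix.cons_val_zero,
      Matrix.cons_val_one, Matrix.head_cons, Matrix.head_fin_const, Fin.zero_eta, Fin.mk_one, Fin.isValue]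
  · convert expcos_deriv a w 1 (a/w) t using 1
    field_simp
    try ring
    try (left; ring)
  · convert expcos_deriv a w 0 (1/w) t using 1
    field_simp
    try ring
    try (left; ring)
  · convert expcos_deriv a w 0 (-((a^2+w^2)/w)) t using 1
    field_simp
    try ring
    try (left; ring)
  · convert expcos_deriv a w 1 (-(a/w)) t using 1
    field_simp
    try ring
    try (left; ring)

lemma Mm_zero (a w : ℝ) : Mm a w 0 = 1 := by
  ext i j
  fin_cases i <;> fin_cases j <;>
    simp [Mm, Matrix.one_apply]

lemma exp_entry_deriv (A : Matrix (Fin 2) (Fin 2) ℝ) (i j : Fin 2) (t : ℝ) :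
    HasDerivAt (fun u : ℝ => NormedSpace.exp (u • A) i j)
      ((NormedSpace.exp (t • A) * A) i j) t := by
  letI : SeminormedRing (Matrix (Fin 2) (Fin 2) ℝ) := Matrix.linftyOpSemiNormedRing
  letI : NormedRing (Matrix (Fin 2) (Fin 2) ℝ) := Matrix.linftyOpNormedRing
  letI : NormedAlgebra ℝ (Matrix (Fin 2) (Fin 2) ℝ) := Matrix.linftyOpNormedAlgebra
  have h := hasDerivAt_exp_smul_const (𝕂 := ℝ) A t
  let L : Matrix (Fin 2) (Fin 2) ℝ →ₗ[ℝ] ℝ :=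
    { toFun := fun M => M i j, map_add' := fun _ _ => rfl, map_smul' := fun _ _ => rfl }
  have hL := (LinearMap.toContinuousLinearMap L).hasFDerivAt (x := NormedSpace.exp (t • A))
  exact hL.comp_hasDerivAt t h

lemma exp_A2 (a w : ℝ) (hw : w ≠ 0) (t : ℝ) :
    NormedSpace.exp (t • A2 a w) = Mm a w t := by
  set A := A2 a w with hA
  have hG : ∀ i j : Fin 2, ∀ s : ℝ,
      HasDerivAt (fun u : ℝ => (NormedSpace.exp (u • -A) * Mm a w u) i j) 0 s := by
    intro i j s
    have hfun : (fun u : ℝ => (NormedSpace.exp (u • -A) * Mm a w u) i j)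
        = fun u : ℝ => NormedSpace.exp (u • -A) i 0 * Mm a w u 0 j
            + NormedSpace.exp (u • -A) i 1 * Mm a w u 1 j := by
      funext u
      simp [Matrix.mul_apply, Fin.sum_univ_two]
    rw [hfun]
    have h0 := (exp_entry_deriv (-A) i 0 s).mul (hasDerivAt_Mm a w hw 0 j s)
    have h1 := (exp_entry_deriv (-A) i 1 s).mul (hasDerivAt_Mm a w hw 1 j s)
    have h := h0.add h1
    refine h.congr_deriv ?_
    simp only [hA, Matrix.mul_apply, Fin.sum_univ_two, Matrix.neg_apply]
    simp only [hA, A2, Matrix.mul_apply, Fin.sum_univ_two, Matrix.cons_val_zero,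
      Matrix.cons_val_one, Matrix.head_cons, Matrix.head_fin_const, Matrix.neg_apply, Fin.zero_eta, Fin.mk_one, Fin.isValue]
    ring
  have hconst : ∀ s : ℝ, NormedSpace.exp (s • -A) * Mm a w s = 1 := by
    intro s
    have hC : ∀ i j : Fin 2, (NormedSpace.exp (s • -A) * Mm a w s) i j
        = (NormedSpace.exp ((0:ℝ) • -A) * Mm a w 0) i j := by
      intro i j
      exact is_const_of_deriv_eq_zero
        (fun u => ((hG i j u).differentiableAt))
        (fun u => (hG i j u).deriv) s 0
    have h1 : NormedSpace.exp ((0:ℝ) • -A) * Mm a w 0 = 1 := by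
      rw [Mm_zero, zero_smul, NormedSpace.exp_zero, one_mul]
    ext i j
    rw [hC i j, h1]
  have hcomm : Commute (t • A) (t • -A) := by
    have h2 : t • -A = -(t • A) := by rw [smul_neg]
    rw [h2]
    exact (Commute.refl (t • A)).neg_right
  have hmul : NormedSpace.exp (t • A) * NormedSpace.exp (t • -A) = 1 := by
    rw [← Matrix.exp_add_of_commute _ _ hcomm]
    have h3 : t • A + t • -A = 0 := by rw [smul_neg]; exact add_neg_cancel _
    rw [h3, NormedSpace.exp_zero]
  calc NormedSpace.exp (t • A)
      = NormedSpace.exp (t • A) * (NormedSpace.exp (t • -A) * Mm a w t) := by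
        rw [hconst, mul_one]
    _ = (NormedSpace.exp (t • A) * NormedSpace.exp (t • -A)) * Mm a w t := by
        rw [mul_assoc]
    _ = Mm a w t := by rw [hmul, one_mul]

lemma combine (θ u s : ℝ) (hθ : 0 < θ) :
    θ * Real.cos s + (θ * u) * Real.sin s
      = (θ * Real.sqrt (1 + u^2)) * Real.cos (s - Real.arctan u) := by
  have h1 : (0:ℝ) < Real.sqrt (1 + u^2) := Real.sqrt_pos.2 (by positivity)
  rw [Real.cos_sub, Real.cos_arctan, Real.sin_arctan]
  field_simp

lemma gmono (a w θ : ℝ) (ha : 0 < a) (hw : 0 < w) (hθ : 0 < θ) :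
    StrictMonoOn (fun v => w * θ * Real.sqrt (1 + ((v + a*θ)/(w*θ))^2)
      * Real.exp (-((a/w) * (π/2 + Real.arctan ((v + a*θ)/(w*θ)))))) (Set.Ici 0) := by
  have hwθ : w*θ ≠ 0 := by positivity
  apply strictMonoOn_of_deriv_pos (convex_Ici 0)
  · apply Continuous.continuousOn
    have harc : Continuous (fun v : ℝ => Real.arctan ((v + a*θ)/(w*θ))) :=
      Real.continuous_arctan.comp (by continuity)
    have hsq : Continuous (fun v : ℝ => Real.sqrt (1 + ((v + a*θ)/(w*θ))^2)) :=
      Real.continuous_sqrt.comp (by continuity)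
    continuity
  · intro v hv
    rw [interior_Ici] at hv
    have hU : HasDerivAt (fun v : ℝ => (v + a*θ)/(w*θ)) (1/(w*θ)) v := by
      simpa using ((hasDerivAt_id v).add_const (a*θ)).div_const (w*θ)
    have hq : HasDerivAt (fun v : ℝ => 1 + ((v + a*θ)/(w*θ))^2)
        (2*((v + a*θ)/(w*θ))*(1/(w*θ))) v := by
      simpa [mul_comm] using ((hU.pow 2).const_add 1)
    have hqpos : (0:ℝ) < 1 + ((v + a*θ)/(w*θ))^2 := by positivity
    have hsq : HasDerivAt (fun v : ℝ => Real.sqrt (1 + ((v + a*θ)/(w*θ))^2))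
        ((2*((v + a*θ)/(w*θ))*(1/(w*θ)))/(2*Real.sqrt (1 + ((v + a*θ)/(w*θ))^2))) v :=
      hq.sqrt hqpos.ne'
    have harc : HasDerivAt (fun v : ℝ => Real.arctan ((v + a*θ)/(w*θ)))
        (1/(1+((v + a*θ)/(w*θ))^2) * (1/(w*θ))) v :=
      ((Real.hasDerivAt_arctan ((v + a*θ)/(w*θ))).comp v hU :)
    have hin : HasDerivAt (fun v : ℝ => -((a/w) * (π/2 + Real.arctan ((v + a*θ)/(w*θ)))))
        (-((a/w) * (1/(1+((v + a*θ)/(w*θ))^2) * (1/(w*θ))))) v := by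
      simpa [Pi.neg_def] using ((harc.const_add (π/2)).const_mul (a/w)).neg
    have hexp := hin.exp
    have htot := (hsq.const_mul (w*θ)).mul hexp
    have hD : HasDerivAt (fun v => w * θ * Real.sqrt (1 + ((v + a*θ)/(w*θ))^2)
        * Real.exp (-((a/w) * (π/2 + Real.arctan ((v + a*θ)/(w*θ))))))
        (Real.exp (-((a/w) * (π/2 + Real.arctan ((v + a*θ)/(w*θ)))))
          * (v / (w * θ * Real.sqrt (1 + ((v + a*θ)/(w*θ))^2)))) v := by
      refine htot.congr_deriv (Eq.symm ?_)
      generalize hu : (v + a*θ)/(w*θ) = u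
      have hv' : v = u*(w*θ) - a*θ := by
        field_simp at hu
        linarith [hu]
      have hS : Real.sqrt (1 + u^2) * Real.sqrt (1 + u^2) = 1 + u^2 :=
        Real.mul_self_sqrt (by positivity)
      have hSpos : (0:ℝ) < Real.sqrt (1 + u^2) := Real.sqrt_pos.2 (by positivity)
      set E := Real.exp (-(a / w * (π / 2 + Real.arctan u))) with hE
      rw [hv', ← hS, Real.sqrt_mul_self (Real.sqrt_nonneg _)]
      field_simp
      linear_combination (0:ℝ) * hS
    rw [hD.deriv]
    have hSpos : (0:ℝ) < Real.sqrt (1 + ((v + a*θ)/(w*θ))^2) := Real.sqrt_pos.2 hqpos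
    have h2 : 0 < v / (w * θ * Real.sqrt (1 + ((v + a*θ)/(w*θ))^2)) := by
      apply div_pos hv
      positivity
    positivity

lemma hit_lemma (a w θ v u : ℝ) (ha : 0 < a) (hw : 0 < w) (hθ : 0 < θ)
    (huv : u * (w*θ) = v + a*θ) :
    IsLeast {t : ℝ | 0 < t ∧ (Mm a w t).mulVec ![θ, v] 0 = 0}
      ((π/2 + Real.arctan u)/w) ∧
    (Mm a w ((π/2 + Real.arctan u)/w)).mulVec ![θ, v] 1
      = -(w * θ * Real.sqrt (1 + u^2)
          * Real.exp (-((a/w) * (π/2 + Real.arctan u)))) := by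
  have hwne : w ≠ 0 := hw.ne'
  have hθne : θ ≠ 0 := hθ.ne'
  have hvu : v = u*(w*θ) - a*θ := by linarith
  set T := (π/2 + Real.arctan u)/w with hT
  have harc1 := Real.neg_pi_div_two_lt_arctan u
  have harc2 := Real.arctan_lt_pi_div_two u
  have hπ := Real.pi_pos
  have hwT : w * T = π/2 + Real.arctan u := by rw [hT]; field_simp
  have hTpos : 0 < T := by
    apply div_pos _ hw; linarith
  have hS : Real.sqrt (1 + u^2) * Real.sqrt (1 + u^2) = 1 + u^2 :=
    Real.mul_self_sqrt (by positivity)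
  have hSpos : (0:ℝ) < Real.sqrt (1 + u^2) := Real.sqrt_pos.2 (by positivity)
  have hv0 : ∀ t, (Mm a w t).mulVec ![θ, v] 0
      = Real.exp (-(a*t)) * ((θ * Real.sqrt (1 + u^2)) * Real.cos (w*t - Real.arctan u)) := by
    intro t
    rw [← combine θ u (w*t) hθ]
    simp only [Mm, Matrix.mulVec, dotProduct, Fin.sum_univ_two, Matrix.cons_val_zero,
      Matrix.cons_val_one, Matrix.head_cons]
    rw [hvu]
    field_simp
    ring
  constructor
  · constructor
    · refine ⟨hTpos, ?_⟩
      rw [hv0, hwT, show π/2 + Real.arctan u - Real.arctan u = π/2 by ring,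
        Real.cos_pi_div_two]
      ring
    · rintro t ⟨ht0, hteq⟩
      by_contra hcon
      push_neg at hcon
      have hwt : 0 < w * t := mul_pos hw ht0
      have hlt : w * t < π/2 + Real.arctan u := by
        calc w * t < w * T := by exact mul_lt_mul_of_pos_left hcon hw
        _ = π/2 + Real.arctan u := hwT
      have hcos : 0 < Real.cos (w*t - Real.arctan u) := by
        apply Real.cos_pos_of_mem_Ioo
        exact ⟨by linarith, by linarith⟩
      rw [hv0] at hteq
      have hpos : 0 < Real.exp (-(a*t))
          * ((θ * Real.sqrt (1 + u^2)) * Real.cos (w*t - Real.arctan u)) := by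
        positivity
      linarith [hteq ▸ hpos]
  · have hcosT : Real.cos (w*T) = -(u / Real.sqrt (1 + u^2)) := by
      rw [hwT, Real.cos_add, Real.cos_pi_div_two, Real.sin_pi_div_two, Real.sin_arctan]
      ring
    have hsinT : Real.sin (w*T) = 1 / Real.sqrt (1 + u^2) := by
      rw [hwT, Real.sin_add, Real.cos_pi_div_two, Real.sin_pi_div_two, Real.cos_arctan]
      ring
    have hTexp : -(a*T) = -((a/w) * (π/2 + Real.arctan u)) := by
      rw [hT]; field_simp
    have hv1 : (Mm a w T).mulVec ![θ, v] 1
        = Real.exp (-(a*T)) * ((-((a^2+w^2)/w) * Real.sin (w*T)) * θ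
            + (Real.cos (w*T) - (a/w) * Real.sin (w*T)) * v) := by
      simp only [Mm, Matrix.mulVec, dotProduct, Fin.sum_univ_two, Matrix.cons_val_zero,
        Matrix.cons_val_one, Matrix.head_cons]
      ring
    rw [hv1, hcosT, hsinT, hTexp]
    set E := Real.exp (-(a / w * (π / 2 + Real.arctan u))) with hE
    rw [hvu, ← hS, Real.sqrt_mul_self (Real.sqrt_nonneg _)]
    field_simp
    ring_nf
    linear_combination (E*w^2) * hS

/-- under Assumption 1 and `θ̂ > 0`, the half-return map `P` is
strictly increasing on `[0, ∞)`. -/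
theorem stmt8 (m c k θ : ℝ) (hm : 0 < m) (hc : 0 < c) (hk : 0 < k)
    (hud : c ^ 2 < 4 * k * m) (hθ : 0 < θ)
    (τ : (Fin 2 → ℝ) → ℝ) (hτ : IsFirstHittingTime m c k τ) :
    StrictMonoOn (halfReturn m c k θ τ) (Set.Ici 0) := by
  obtain ⟨a, hadef⟩ : ∃ a : ℝ, a = c/(2*m) := ⟨_, rfl⟩
  have ha : 0 < a := by rw [hadef]; positivity
  have hwpos : 0 < k/m - a^2 := by
    rw [hadef, div_pow, sub_pos, div_lt_div_iff₀ (by positivity) hm]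
    nlinarith
  obtain ⟨w, hwdef⟩ : ∃ w : ℝ, w = Real.sqrt (k/m - a^2) := ⟨_, rfl⟩
  have hw : 0 < w := by rw [hwdef]; exact Real.sqrt_pos.2 hwpos
  have hw2 : a^2 + w^2 = k/m := by
    rw [hwdef, Real.sq_sqrt hwpos.le]; ring
  have hAeq : Amat m c k = A2 a w := by
    ext i j
    fin_cases i <;> fin_cases j <;> simp [Amat, A2]
    · rw [neg_div]
      have : k/m = a^2 + w^2 := hw2.symm
      linarith
    · rw [hadef]; field_simp
  have hflow : ∀ (t : ℝ) (x : Fin 2 → ℝ), flow m c k t x = (Mm a w t).mulVec x := by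
    intro t x
    rw [flow, hAeq, exp_A2 a w hw.ne']
  have hPval : ∀ v : ℝ, halfReturn m c k θ τ v
      = w * θ * Real.sqrt (1 + ((v + a*θ)/(w*θ))^2)
        * Real.exp (-((a/w) * (π/2 + Real.arctan ((v + a*θ)/(w*θ))))) := by
    intro v
    have hne : (![θ, v] : Fin 2 → ℝ) ≠ 0 := by
      intro h
      have h0 := congrFun h 0
      simp at h0
      exact hθ.ne' h0
    have huv : ((v + a*θ)/(w*θ)) * (w*θ) = v + a*θ := by field_simp
    obtain ⟨hleast, hval⟩ := hit_lemma a w θ v ((v + a*θ)/(w*θ)) ha hw hθ huv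
    have h1 := hτ _ hne
    have hsets : {t : ℝ | 0 < t ∧ flow m c k t ![θ,v] 0 = 0}
        = {t : ℝ | 0 < t ∧ (Mm a w t).mulVec ![θ,v] 0 = 0} := by
      ext t
      rw [Set.mem_setOf_eq, Set.mem_setOf_eq, hflow]
    rw [hsets] at h1
    have hτv : τ ![θ,v] = (π/2 + Real.arctan ((v + a*θ)/(w*θ)))/w := h1.unique hleast
    rw [halfReturn, hτv, hflow, hval]
    ring
  have hg := gmono a w θ ha hw hθ
  intro v hv v' hv' hlt
  rw [hPval v, hPval v']
  exact hg hv hv' hlt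
end

section
/- (Theorem 1, existence and uniqueness of the hybrid periodic orbit, return-map form.) Under Assumption 1 and with θ̂ > 0, there exists a unique v* > 0 such that P(v*) = v*, i.e., the half-return map of the reset mass–spring–damper hybrid system has exactly one positive fixed point, corresponding to the unique nontrivial hybrid periodic orbit. -/
open NormedSpace

lemma exp_sq_neg {A : Type*} [NormedRing A] [NormedAlgebra ℝ A] [CompleteSpace A]
    (B : A) (ω : ℝ) (hω : ω ≠ 0) (hB : B * B = (-(ω^2)) • (1:A)) (t : ℝ) :
    exp (t • B) = Real.cos (ω*t) • (1:A) + (Real.sin (ω*t)/ω) • B := by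
  set F : ℝ → A := fun t => Real.cos (ω*t) • (1:A) + (Real.sin (ω*t)/ω) • B with hF
  have hBF : ∀ u, B * F u = (-(ω * Real.sin (ω*u))) • (1:A) + Real.cos (ω*u) • B := by
    intro u
    simp only [hF, mul_add, mul_smul_comm, mul_one, hB, smul_smul]
    have : Real.sin (ω*u)/ω * (-(ω^2)) = -(ω * Real.sin (ω*u)) := by field_simp
    rw [this]
    exact add_comm _ _
  have hFB : ∀ u, F u * B = B * F u := by
    intro u
    simp only [hF, add_mul, mul_add, smul_mul_assoc, mul_smul_comm, one_mul, mul_one]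
  have hFd : ∀ u, HasDerivAt F ((-(ω * Real.sin (ω*u))) • (1:A) + Real.cos (ω*u) • B) u := by
    intro u
    have hin : HasDerivAt (fun t : ℝ => ω * t) (ω * 1) u := (hasDerivAt_id u).const_mul ω
    have h1' : HasDerivAt (fun t : ℝ => Real.cos (ω*t)) (-Real.sin (ω*u) * (ω * 1)) u :=
      HasDerivAt.comp u (Real.hasDerivAt_cos (ω*u)) hin
    have h1 : HasDerivAt (fun t : ℝ => Real.cos (ω*t)) (-(ω * Real.sin (ω*u))) u := by
      convert h1' using 1; ring
    have h2' : HasDerivAt (fun t : ℝ => Real.sin (ω*t)/ω) (Real.cos (ω*u) * (ω * 1) / ω) u :=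
      (HasDerivAt.comp u (Real.hasDerivAt_sin (ω*u)) hin).div_const ω
    have h2 : HasDerivAt (fun t : ℝ => Real.sin (ω*t)/ω) (Real.cos (ω*u)) u := by
      convert h2' using 1; field_simp
    exact (h1.smul_const (1:A)).add (h2.smul_const B)
  set G : ℝ → A := fun u => F u * exp ((-u) • B) with hGdef
  have hexpneg : ∀ u : ℝ, HasDerivAt (fun u : ℝ => exp ((-u) • B)) (-(exp ((-u) • B) * B)) u := by
    intro u
    have h : HasDerivAt (fun u : ℝ => exp ((-u) • B)) ((-1:ℝ) • (exp ((-u) • B) * B)) u :=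
      HasDerivAt.scomp u (hasDerivAt_exp_smul_const B (-u)) (hasDerivAt_neg u)
    rw [neg_one_smul] at h
    exact h
  have hG : ∀ u, HasDerivAt G 0 u := by
    intro u
    have hcomm : Commute B (exp ((-u) • B)) := ((Commute.refl B).smul_right (-u)).exp_right
    have := (hFd u).mul (hexpneg u)
    convert this using 1
    · rfl
    rw [← hcomm.eq, mul_neg, ← mul_assoc, hFB u, hBF u]
    abel
  have hconst : ∀ u : ℝ, G u = 1 := by
    intro u
    have h := is_const_of_deriv_eq_zero (fun x => (hG x).differentiableAt)
      (fun x => (hG x).deriv) u 0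
    rw [h]
    simp [hGdef, hF]
  have hinv : exp ((-t) • B) * exp (t • B) = 1 := by
    rw [← exp_add_of_commute_of_mem_ball (𝕂 := ℝ) (((Commute.refl B).smul_left (-t)).smul_right t)
      ((expSeries_radius_eq_top ℝ A).symm ▸ edist_lt_top _ _) ((expSeries_radius_eq_top ℝ A).symm ▸ edist_lt_top _ _)]
    rw [show (-t) • B + t • B = (0:A) by module]
    exact exp_zero
  have hc : F t * exp ((-t) • B) = 1 := by simpa [hGdef] using hconst t
  have hgoal : F t = exp (t • B) := by
    rw [← one_mul (exp (t • B)), ← hc, mul_assoc, hinv, mul_one]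
  exact hgoal.symm

lemma exp_Amat (m c k σ ω : ℝ) (hm : 0 < m) (hσ : σ = c/(2*m)) (hω0 : 0 < ω)
    (hω : ω^2 = k/m - σ^2) (t : ℝ) :
    NormedSpace.exp (t • Amat m c k) =
      Real.exp (-(σ*t)) • (Real.cos (ω*t) • (1 : Matrix (Fin 2) (Fin 2) ℝ)
        + (Real.sin (ω*t)/ω) • (Amat m c k + σ • (1 : Matrix (Fin 2) (Fin 2) ℝ))) := by
  letI : SeminormedRing (Matrix (Fin 2) (Fin 2) ℝ) := Matrix.linftyOpSemiNormedRing
  letI : NormedRing (Matrix (Fin 2) (Fin 2) ℝ) := Matrix.linftyOpNormedRing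
  letI : NormedAlgebra ℝ (Matrix (Fin 2) (Fin 2) ℝ) := Matrix.linftyOpNormedAlgebra
  have hm' : (m:ℝ) ≠ 0 := ne_of_gt hm
  set B : Matrix (Fin 2) (Fin 2) ℝ := Amat m c k + σ • (1 : Matrix (Fin 2) (Fin 2) ℝ) with hBdef
  have hB : B * B = (-(ω^2)) • (1 : Matrix (Fin 2) (Fin 2) ℝ) := by
    ext i j
    fin_cases i <;> fin_cases j <;>
      · simp [hBdef, show Amat m c k = Matrix.of ![![0, 1], ![-k/m, -c/m]] from rfl, Matrix.mul_apply, Fin.sum_univ_two, Matrix.one_apply, Matrix.add_apply, Matrix.smul_apply, hω, hσ]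
        field_simp
        ring
  have hsplit : t • Amat m c k = (-(σ*t)) • (1 : Matrix (Fin 2) (Fin 2) ℝ) + t • B := by
    rw [hBdef]; module
  erw [hsplit, NormedSpace.exp_add_of_commute_of_mem_ball (𝕂 := ℝ) (((Commute.one_left B).smul_left (-(σ*t))).smul_right t)
    ((NormedSpace.expSeries_radius_eq_top ℝ (Matrix (Fin 2) (Fin 2) ℝ)).symm ▸ edist_lt_top _ _) ((NormedSpace.expSeries_radius_eq_top ℝ (Matrix (Fin 2) (Fin 2) ℝ)).symm ▸ edist_lt_top _ _)]
  have h1 : NormedSpace.exp ((-(σ*t)) • (1 : Matrix (Fin 2) (Fin 2) ℝ))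
      = Real.exp (-(σ*t)) • (1 : Matrix (Fin 2) (Fin 2) ℝ) := by
    erw [← Algebra.algebraMap_eq_smul_one, ← NormedSpace.algebraMap_exp_comm,
      ← Real.exp_eq_exp_ℝ, Algebra.algebraMap_eq_smul_one]
  erw [h1, exp_sq_neg B ω (ne_of_gt hω0) hB t, smul_mul_assoc, one_mul]

lemma flow_formula_s10 (m c k σ ω : ℝ) (hm : 0 < m) (hσ : σ = c/(2*m)) (hω0 : 0 < ω)
    (hω : ω^2 = k/m - σ^2) (t θ v : ℝ) :
    flow m c k t ![θ, v] 0
        = Real.exp (-(σ*t)) * (θ * Real.cos (ω*t) + (σ*θ+v) * (Real.sin (ω*t)/ω))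
    ∧ flow m c k t ![θ, v] 1
        = Real.exp (-(σ*t)) * (v * Real.cos (ω*t) - (k/m*θ + σ*v) * (Real.sin (ω*t)/ω)) := by
  have hm' : (m:ℝ) ≠ 0 := ne_of_gt hm
  constructor <;>
    · rw [flow, exp_Amat m c k σ ω hm hσ hω0 hω t]
      simp [Matrix.mulVec, dotProduct, Fin.sum_univ_two, show Amat m c k = Matrix.of ![![0, 1], ![-k/m, -c/m]] from rfl, Matrix.one_apply,
        Matrix.smul_apply, Matrix.add_apply, hσ]
      field_simp
      ring

open Real in
lemma key_lemma (m c k θ σ ω : ℝ) (hm : 0 < m) (hσ : σ = c/(2*m)) (hσ0 : 0 < σ)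
    (hω0 : 0 < ω) (hω : ω^2 = k/m - σ^2) (hθ : 0 < θ) (v : ℝ) (hv : 0 ≤ v) :
    IsLeast {t : ℝ | 0 < t ∧ flow m c k t ![θ,v] 0 = 0} ((π - Real.arctan (θ*ω/(σ*θ+v)))/ω)
    ∧ flow m c k ((π - Real.arctan (θ*ω/(σ*θ+v)))/ω) ![θ,v] 1
      = -(ω * Real.sqrt (θ^2 + ((σ*θ+v)/ω)^2)
          * Real.exp (-(σ * ((π - Real.arctan (θ*ω/(σ*θ+v)))/ω)))) := by
  have hm' : (m:ℝ) ≠ 0 := ne_of_gt hm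
  have hω' : ω ≠ 0 := ne_of_gt hω0
  obtain ⟨s, hsdef⟩ : ∃ x : ℝ, x = σ*θ+v := ⟨_, rfl⟩
  rw [← hsdef]
  have hs : 0 < s := by rw [hsdef]; positivity
  obtain ⟨b, hbdef⟩ : ∃ x : ℝ, x = s/ω := ⟨_, rfl⟩
  rw [← hbdef]
  have hb : 0 < b := by rw [hbdef]; exact div_pos hs hω0
  obtain ⟨a, hadef⟩ : ∃ x : ℝ, x = Real.arctan (θ*ω/s) := ⟨_, rfl⟩
  rw [← hadef]
  have hab : θ*ω/s = θ/b := by rw [hbdef]; field_simp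
  obtain ⟨r, hrdef⟩ : ∃ x : ℝ, x = Real.sqrt (θ^2 + b^2) := ⟨_, rfl⟩
  rw [← hrdef]
  have hr0 : 0 < r := by rw [hrdef]; exact Real.sqrt_pos.2 (by positivity)
  have hrsq : r^2 = θ^2 + b^2 := by rw [hrdef]; exact Real.sq_sqrt (by positivity)
  have hb' : b ≠ 0 := hb.ne'
  have hr' : r ≠ 0 := hr0.ne'
  have hs' : s ≠ 0 := hs.ne'
  have hsqrt1 : Real.sqrt (1 + (θ*ω/s)^2) = r/b := by
    have h1 : 1 + (θ*ω/s)^2 = (r/b)^2 := by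
      rw [hab, div_pow, div_pow, hrsq]; field_simp; ring
    rw [h1, Real.sqrt_sq (by positivity)]
  have hsin : Real.sin a = θ/r := by
    rw [hadef, Real.sin_arctan, hsqrt1, hab]
    field_simp
  have hcos : Real.cos a = b/r := by
    rw [hadef, Real.cos_arctan, hsqrt1]
    rw [one_div_div]
  have ha0 : 0 < a := by
    have h := Real.arctan_strictMono (show (0:ℝ) < θ*ω/s by positivity)
    rwa [Real.arctan_zero, ← hadef] at h
  have haπ : a < π/2 := by rw [hadef]; exact Real.arctan_lt_pi_div_two _
  obtain ⟨T, hTdef⟩ : ∃ x : ℝ, x = (π - a)/ω := ⟨_, rfl⟩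
  rw [← hTdef]
  have hT0 : 0 < T := by
    rw [hTdef]; exact div_pos (by linarith [Real.pi_pos]) hω0
  have hωT : ω * T = π - a := by rw [hTdef]; field_simp
  have hflow0 : ∀ t : ℝ, flow m c k t ![θ,v] 0
      = Real.exp (-(σ*t)) * (r * Real.sin (ω*t + a)) := by
    intro t
    rw [(flow_formula_s10 m c k σ ω hm hσ hω0 hω t θ v).1]
    congr 1
    rw [Real.sin_add, hsin, hcos, hbdef, hsdef]
    field_simp
    ring
  have hmem : flow m c k T ![θ,v] 0 = 0 := by
    rw [hflow0, hωT, show π - a + a = π by ring, Real.sin_pi, mul_zero, mul_zero]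
  constructor
  · constructor
    · exact ⟨hT0, hmem⟩
    · rintro t ⟨ht0, htz⟩
      by_contra hcon
      push_neg at hcon
      have h1 : ω * t < ω * T := (mul_lt_mul_iff_right₀ hω0).2 hcon
      rw [hωT] at h1
      have hsinpos : 0 < Real.sin (ω*t + a) :=
        Real.sin_pos_of_pos_of_lt_pi (by positivity) (by linarith)
      have : 0 < flow m c k t ![θ,v] 0 := by
        rw [hflow0]; positivity
      linarith [this.ne' htz]
  · rw [(flow_formula_s10 m c k σ ω hm hσ hω0 hω T θ v).2, hωT, Real.cos_pi_sub, Real.sin_pi_sub,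
      hsin, hcos]
    rw [show Real.exp (-(σ*T)) * (v * -(b/r) - (k/m*θ + σ*v) * (θ/r/ω))
        = -(Real.exp (-(σ*T)) * (v * (b/r) + (k/m*θ + σ*v) * (θ/r/ω))) by ring]
    rw [show -(ω * r * Real.exp (-(σ * T))) = -(Real.exp (-(σ*T)) * (ω * r)) by ring]
    congr 1
    congr 1
    have hkm : k/m = ω^2 + σ^2 := by linarith
    have hbs : b * ω = σ*θ + v := by rw [hbdef, hsdef]; field_simp
    rw [hkm]
    apply mul_right_cancel₀ hr0.ne'
    field_simp
    linear_combination (-(b*ω + σ*θ)) * hbs + (-(ω^2)) * hrsq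

open Real in
lemma g_deriv (θ σ ω : ℝ) (hθ : 0 < θ) (hσ0 : 0 < σ) (hω0 : 0 < ω) (v : ℝ) (hv : 0 ≤ v) :
    ∃ d : ℝ, HasDerivAt (fun v => ω * Real.sqrt (θ^2 + ((σ*θ+v)/ω)^2)
      * Real.exp (-(σ * ((π - Real.arctan (θ*ω/(σ*θ+v)))/ω)))) d v ∧ 0 ≤ d ∧ d < 1 := by
  have hω' : ω ≠ 0 := hω0.ne'
  have hs : 0 < σ*θ+v := by positivity
  have hs' : σ*θ+v ≠ 0 := hs.ne'
  have hq : (0:ℝ) < θ^2 + ((σ*θ+v)/ω)^2 := by positivity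
  obtain ⟨R, hRdef⟩ : ∃ x : ℝ, x = Real.sqrt (θ^2 + ((σ*θ+v)/ω)^2) := ⟨_, rfl⟩
  have hR0 : 0 < R := by rw [hRdef]; exact Real.sqrt_pos.2 hq
  have hRsq : R^2 = θ^2 + ((σ*θ+v)/ω)^2 := by rw [hRdef]; exact Real.sq_sqrt hq.le
  have hinner : HasDerivAt (fun v : ℝ => (σ*θ+v)/ω) (1/ω) v := by
    have := ((hasDerivAt_id v).const_add (σ*θ)).div_const ω
    simpa using this
  have hA1 : HasDerivAt (fun v : ℝ => θ^2 + ((σ*θ+v)/ω)^2)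
      (2*((σ*θ+v)/ω)^1*(1/ω)) v := (hinner.pow 2).const_add (θ^2)
  have hA2 : HasDerivAt (fun v : ℝ => Real.sqrt (θ^2 + ((σ*θ+v)/ω)^2))
      (1/(2*R) * (2*((σ*θ+v)/ω)^1*(1/ω))) v := by
    have := (Real.hasDerivAt_sqrt hq.ne').comp v hA1
    rw [← hRdef] at this
    exact this
  have hquot : HasDerivAt (fun v : ℝ => θ*ω/(σ*θ+v))
      ((0*(σ*θ+v) - θ*ω*1)/(σ*θ+v)^2) v := by
    exact (hasDerivAt_const v (θ*ω)).div ((hasDerivAt_id v).const_add (σ*θ)) hs'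
  have harctan : HasDerivAt (fun v : ℝ => Real.arctan (θ*ω/(σ*θ+v)))
      (1/(1+(θ*ω/(σ*θ+v))^2) * ((0*(σ*θ+v) - θ*ω*1)/(σ*θ+v)^2)) v :=
    (Real.hasDerivAt_arctan _).comp v hquot
  have hexparg : HasDerivAt (fun v : ℝ => -(σ * ((π - Real.arctan (θ*ω/(σ*θ+v)))/ω)))
      (-(σ * ((0 - (1/(1+(θ*ω/(σ*θ+v))^2) * ((0*(σ*θ+v) - θ*ω*1)/(σ*θ+v)^2)))/ω))) v :=
    ((((hasDerivAt_const v π).sub harctan).div_const ω).const_mul σ).neg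
  have hexp : HasDerivAt (fun v : ℝ => Real.exp (-(σ * ((π - Real.arctan (θ*ω/(σ*θ+v)))/ω))))
      (Real.exp (-(σ * ((π - Real.arctan (θ*ω/(σ*θ+v)))/ω)))
        * (-(σ * ((0 - (1/(1+(θ*ω/(σ*θ+v))^2) * ((0*(σ*θ+v) - θ*ω*1)/(σ*θ+v)^2)))/ω)))) v :=
    (Real.hasDerivAt_exp _).comp v hexparg
  obtain ⟨E, hEdef⟩ : ∃ x : ℝ, x = Real.exp (-(σ * ((π - Real.arctan (θ*ω/(σ*θ+v)))/ω))) := ⟨_, rfl⟩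
  have hE0 : 0 < E := by rw [hEdef]; exact Real.exp_pos _
  have hE1 : E ≤ 1 := by
    rw [hEdef, Real.exp_le_one_iff, neg_nonpos]
    have ha2 : Real.arctan (θ*ω/(σ*θ+v)) < π/2 := Real.arctan_lt_pi_div_two _
    have hπ : (0:ℝ) < π := Real.pi_pos
    apply mul_nonneg hσ0.le (div_nonneg (by linarith) hω0.le)
  have hprod := ((hA2.const_mul ω).mul hexp)
  refine ⟨E * v / (ω * R), ?_, ?_, ?_⟩
  · have heq : ω * (1/(2*R) * (2*((σ*θ+v)/ω)^1*(1/ω)))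
        * Real.exp (-(σ * ((π - Real.arctan (θ*ω/(σ*θ+v)))/ω)))
        + ω * Real.sqrt (θ^2 + ((σ*θ+v)/ω)^2)
          * (Real.exp (-(σ * ((π - Real.arctan (θ*ω/(σ*θ+v)))/ω)))
            * (-(σ * ((0 - (1/(1+(θ*ω/(σ*θ+v))^2) * ((0*(σ*θ+v) - θ*ω*1)/(σ*θ+v)^2)))/ω))))
        = E * v / (ω * R) := by
      rw [← hRdef, ← hEdef]
      have h1 : (0:ℝ) < 1+(θ*ω/(σ*θ+v))^2 := by positivity
      have hRsq' : ω^2*R^2 = ω^2*θ^2 + (σ*θ+v)^2 := by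
        rw [hRsq]; field_simp
      field_simp
      linear_combination (-(σ*θ)) * hRsq'
    rw [← heq]
    exact hprod
  · positivity
  · rw [div_lt_one (by positivity)]
    have hbR : (σ*θ+v)/ω ≤ R := by
      nlinarith [hRsq, hR0, sq_nonneg θ, div_pos hs hω0]
    have h2 : (σ*θ+v) ≤ ω * R := by
      have := (div_le_iff₀ hω0).1 hbR
      linarith
    nlinarith [mul_le_of_le_one_left hv hE1]

noncomputable def gmap (θ σ ω : ℝ) : ℝ → ℝ := fun v =>
  ω * Real.sqrt (θ^2 + ((σ*θ+v)/ω)^2)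
    * Real.exp (-(σ * ((Real.pi - Real.arctan (θ*ω/(σ*θ+v)))/ω)))

/-- Theorem 1, return-map form: under Assumption 1 and `θ̂ > 0`,
there exists a unique `v* > 0` with `P(v*) = v*`: the half-return map has exactly
one positive fixed point, corresponding to the unique nontrivial hybrid periodic
orbit. -/
theorem stmt10 (m c k θ : ℝ) (hm : 0 < m) (hc : 0 < c) (hk : 0 < k)
    (hud : c ^ 2 < 4 * k * m) (hθ : 0 < θ)
    (τ : (Fin 2 → ℝ) → ℝ) (hτ : IsFirstHittingTime m c k τ) :
    ∃! v : ℝ, 0 < v ∧ halfReturn m c k θ τ v = v := by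
  have hm' : m ≠ 0 := hm.ne'
  obtain ⟨σ, hσ⟩ : ∃ x:ℝ, x = c/(2*m) := ⟨_, rfl⟩
  have hσ0 : 0 < σ := by rw [hσ]; positivity
  have hkm2 : 0 < k/m - σ^2 := by
    rw [hσ, show k/m - (c/(2*m))^2 = (4*k*m - c^2)/(4*m^2) by field_simp; ring]
    exact div_pos (by linarith) (by positivity)
  obtain ⟨ω, hωdef⟩ : ∃ x:ℝ, x = Real.sqrt (k/m - σ^2) := ⟨_, rfl⟩
  have hω0 : 0 < ω := by rw [hωdef]; exact Real.sqrt_pos.2 hkm2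
  have hω : ω^2 = k/m - σ^2 := by rw [hωdef]; exact Real.sq_sqrt hkm2.le
  have hbridge : ∀ v : ℝ, 0 ≤ v → halfReturn m c k θ τ v = gmap θ σ ω v := by
    intro v hv
    obtain ⟨hleast, hval⟩ := key_lemma m c k θ σ ω hm hσ hσ0 hω0 hω hθ v hv
    have hx : (![θ, v] : Fin 2 → ℝ) ≠ 0 := by
      intro h
      have h0 := congrFun h 0
      simp at h0
      exact hθ.ne' h0
    have hτv : τ ![θ, v] = (Real.pi - Real.arctan (θ*ω/(σ*θ+v)))/ω :=
      (hτ ![θ,v] hx).unique hleast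
    show -(flow m c k (τ ![θ, v]) ![θ, v] 1) = gmap θ σ ω v
    rw [hτv, hval, neg_neg]
    rfl
  have hcont : ContinuousOn (fun v => gmap θ σ ω v - v) (Set.Ici 0) := by
    intro v hv
    obtain ⟨d, hd, _, _⟩ := g_deriv θ σ ω hθ hσ0 hω0 v hv
    exact ((hd.sub (hasDerivAt_id v)).continuousAt).continuousWithinAt
  have hanti : StrictAntiOn (fun v => gmap θ σ ω v - v) (Set.Ici 0) := by
    apply strictAntiOn_of_deriv_neg (convex_Ici 0) hcont
    intro x hx
    rw [interior_Ici] at hx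
    obtain ⟨d, hd, _, hd1⟩ := g_deriv θ σ ω hθ hσ0 hω0 x (le_of_lt hx)
    have hd' : HasDerivAt (fun v => gmap θ σ ω v - v) (d - 1) x := hd.sub (hasDerivAt_id x)
    rw [hd'.deriv]
    linarith
  have hg0 : 0 < gmap θ σ ω 0 := by
    unfold gmap
    have h1 : (0:ℝ) < θ^2 + ((σ*θ+0)/ω)^2 := by positivity
    positivity
  obtain ⟨q, hqdef⟩ : ∃ x:ℝ, x = Real.exp (-(σ * (Real.pi/(2*ω)))) := ⟨_, rfl⟩
  have hq0 : 0 < q := by rw [hqdef]; exact Real.exp_pos _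
  have hq1 : q < 1 := by
    rw [hqdef, Real.exp_lt_one_iff, neg_lt_zero]
    have := Real.pi_pos
    positivity
  have hub : ∀ v : ℝ, 0 ≤ v → gmap θ σ ω v ≤ q * (ω*θ + (σ*θ + v)) := by
    intro v hv
    have hs : 0 < σ*θ+v := by positivity
    have ha : Real.arctan (θ*ω/(σ*θ+v)) ≤ Real.pi/2 := (Real.arctan_lt_pi_div_two _).le
    have hE : Real.exp (-(σ * ((Real.pi - Real.arctan (θ*ω/(σ*θ+v)))/ω))) ≤ q := by
      rw [hqdef]
      apply Real.exp_le_exp.2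
      apply neg_le_neg
      apply mul_le_mul_of_nonneg_left ?_ hσ0.le
      rw [div_le_div_iff₀ (by positivity) hω0]
      nlinarith [Real.pi_pos]
    have hR : Real.sqrt (θ^2 + ((σ*θ+v)/ω)^2) ≤ θ + (σ*θ+v)/ω := by
      calc Real.sqrt (θ^2 + ((σ*θ+v)/ω)^2) ≤ Real.sqrt ((θ + (σ*θ+v)/ω)^2) :=
            Real.sqrt_le_sqrt (by nlinarith [div_pos hs hω0])
        _ = θ + (σ*θ+v)/ω := Real.sqrt_sq (by positivity)
    have hstep : ω * Real.sqrt (θ^2 + ((σ*θ+v)/ω)^2)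
        * Real.exp (-(σ * ((Real.pi - Real.arctan (θ*ω/(σ*θ+v)))/ω)))
        ≤ (ω * (θ + (σ*θ+v)/ω)) * q := by
      apply mul_le_mul (mul_le_mul_of_nonneg_left hR hω0.le) hE (Real.exp_pos _).le
      positivity
    calc gmap θ σ ω v ≤ (ω * (θ + (σ*θ+v)/ω)) * q := hstep
      _ = q * (ω*θ + (σ*θ + v)) := by field_simp
  obtain ⟨V, hVdef⟩ : ∃ x:ℝ, x = q*(ω*θ+σ*θ)/(1-q) + 1 := ⟨_, rfl⟩
  have h1q : 0 < 1 - q := by linarith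
  have hV0 : 0 ≤ V := by rw [hVdef]; positivity
  have hfV : gmap θ σ ω V - V < 0 := by
    have h1 := hub V hV0
    have hW : (1-q)*(q*(ω*θ+σ*θ)/(1-q)) = q*(ω*θ+σ*θ) := by field_simp
    have h2 : q * (ω*θ + (σ*θ + V)) < V := by nlinarith [hVdef, hq0, hq1]
    linarith
  have hf0 : 0 < gmap θ σ ω 0 - 0 := by simpa using hg0
  have hc' : ContinuousOn (fun v => gmap θ σ ω v - v) (Set.Icc 0 V) :=
    hcont.mono (Set.Icc_subset_Ici_self)
  obtain ⟨v, hvmem, hfv⟩ := intermediate_value_Icc' hV0 hc' ⟨hfV.le, hf0.le⟩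
  have hv0 : 0 < v := by
    rcases (hvmem.1).lt_or_eq with h | h
    · exact h
    · exfalso; rw [← h] at hfv; simp only at hfv; linarith
  refine ⟨v, ⟨hv0, ?_⟩, ?_⟩
  · rw [hbridge v hvmem.1]; simp only at hfv; linarith
  · rintro w ⟨hw0, hwfix⟩
    have hfw : gmap θ σ ω w - w = 0 := by rw [← hbridge w hw0.le, hwfix]; ring
    exact hanti.injOn (Set.mem_Ici.2 hw0.le) (Set.mem_Ici.2 hvmem.1)
      (by simp only at hfv ⊢; rw [hfw, hfv])
end

section
/- (Closure of the periodic trajectory.) Under Assumption 1 and with θ̂ > 0, suppose v* > 0 satisfies P(v*) = v* and set τ* = τ((θ̂, v*)). Then exp(τ* A)·(θ̂, v*) = (0, −v*), and the jump map applied at this point gives (−θ̂, −v*) = −(θ̂, v*); by linearity of the flow, exp(τ* A)·(−θ̂, −v*) = (0, v*), whose jump image is (θ̂, v*). Hence the hybrid solution starting from (θ̂, v*) is a hybrid periodic trajectory with period parameters (T, J) = (2·τ*, 2). -/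
/-- closure of the periodic trajectory: under Assumption 1 and
`θ̂ > 0`, if `v* > 0` satisfies `P(v*) = v*` and `τ* = τ((θ̂, v*))`, then
`exp(τ* A)·(θ̂, v*) = (0, −v*)`; the jump map applied at this point gives
`(−θ̂, −v*) = −(θ̂, v*)`, and by linearity `exp(τ* A)·(−θ̂, −v*) = (0, v*)`,
whose jump image is `(θ̂, v*)`.  Hence the hybrid solution from `(θ̂, v*)` is
periodic with period parameters `(T, J) = (2·τ*, 2)`. -/
theorem stmt12 (m c k θ : ℝ) (hm : 0 < m) (hc : 0 < c) (hk : 0 < k)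
    (hud : c ^ 2 < 4 * k * m) (hθ : 0 < θ)
    (τ : (Fin 2 → ℝ) → ℝ) (hτ : IsFirstHittingTime m c k τ)
    (vstar : ℝ) (hv : 0 < vstar) (hfix : halfReturn m c k θ τ vstar = vstar) :
    flow m c k (τ ![θ, vstar]) ![θ, vstar] = ![0, -vstar] ∧
    (![-θ, -vstar] : Fin 2 → ℝ) = -![θ, vstar] ∧
    flow m c k (τ ![θ, vstar]) ![-θ, -vstar] = ![0, vstar] := by
  have hx : (![θ, vstar] : Fin 2 → ℝ) ≠ 0 := by
    intro h
    have := congrFun h 0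
    simp at this; linarith
  obtain ⟨⟨hpos, h0⟩, -⟩ := hτ _ hx
  have h1 : flow m c k (τ ![θ, vstar]) ![θ, vstar] 1 = -vstar := by
    have := hfix; unfold halfReturn at this; linarith
  have hneg : (![-θ, -vstar] : Fin 2 → ℝ) = -![θ, vstar] := by
    funext i; fin_cases i <;> simp
  have hflow : flow m c k (τ ![θ, vstar]) ![θ, vstar] = ![0, -vstar] := by
    funext i; fin_cases i <;> simp [h0, h1]
  refine ⟨hflow, hneg, ?_⟩
  rw [hneg]
  have hlin : flow m c k (τ ![θ, vstar]) (-![θ, vstar])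
      = -(flow m c k (τ ![θ, vstar]) ![θ, vstar]) := by
    simp only [flow, Matrix.mulVec_neg]
  rw [hlin, hflow]
  funext i; fin_cases i <;> simp
end
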